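/- arXiv:2010.14837 — 5 statements merged into one kernel-verified Lean document; each statement's English description precedes it below -/
import Mathlib

section
/- Let n ≥ 1 and let R be a Sylow 2-subgroup of Sp_{2n}(F_2). Then every group homomorphism from R to the multiplicative group ℂˣ takes values in {1, −1}. -/
/-!
Order the basis of `𝔽₂²ⁿ` as `e₁, …, eₙ, fₙ, …, f₁`, so that the symplectic form pairs the
basis vectors of heights `h` and `2n - 1 - h`. The symplectic matrices that are upper
unitriangular in this basis form a `2`-group `U`. The flag of coordinate subspaces is recovered
from `U` as its iterated fixed spaces, so the normalizer of `U` preserves it and hence lies in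
`U`; by the normalizer condition for nilpotent groups, `U` is a Sylow `2`-subgroup. Clearing the
superdiagonals of an element of `U` one entry at a time by root elements `1 + E_{ab} + E_{b̄ā}`
shows that these involutions generate `U`, so every homomorphism from `U`, or from a conjugate
of `U`, to an abelian group has image of exponent `2`.
-/

namespace Subgroup

theorem le_of_normalizer_le {G : Type*} [Group G] {H Q : Subgroup G} [Group.IsNilpotent Q]
    (hHQ : H ≤ Q) (hN : normalizer (H : Set G) ≤ H) : Q ≤ H := by
  by_contra hQH
  have hlt : H.subgroupOf Q < ⊤ := lt_top_iff_ne_top.mpr fun h => hQH (subgroupOf_eq_top.mp h)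
  obtain ⟨g, hgN, hgH⟩ := SetLike.exists_of_lt (Group.normalizerCondition_of_isNilpotent _ hlt)
  rw [← subgroupOf_normalizer_eq hHQ] at hgN
  exact hgH (hN hgN)

theorem map_sq_eq_one_of_eq_closure {G A : Type*} [Group G] [CommGroup A] {H : Subgroup G}
    {S : Set G} (hH : H = closure S) (hS : ∀ s ∈ S, s ^ 2 = 1) (f : H →* A) (x : H) :
    f x ^ 2 = 1 := by
  subst hH
  have : closure (((↑) : closure S → G) ⁻¹' S) ≤ ((powMonoidHom 2).comp f).ker :=
    (closure_le _).mpr fun s hs => by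
      have : s ^ 2 = 1 := Subtype.ext (by simpa using hS _ hs)
      simp [← map_pow, this]
  exact this (closure_closure_coe_preimage (k := S) ▸ mem_top x)

end Subgroup

def IsPGroup.toSylowOfNormalizerLE {p : ℕ} [Fact p.Prime] {G : Type*} [Group G] [Finite G]
    {P : Subgroup G} (hP : IsPGroup p P) (hN : Subgroup.normalizer (P : Set G) ≤ P) :
    Sylow p G where
  toSubgroup := P
  isPGroup' := hP
  is_maximal' hQ hPQ :=
    haveI := hQ.isNilpotent
    le_antisymm (Subgroup.le_of_normalizer_le hPQ hN) hPQ

theorem ZMod.eq_one_of_ne_zero {x : ZMod 2} (hx : x ≠ 0) : x = 1 :=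
  Fin.eq_one_of_ne_zero x hx

theorem one_add_pow_two_pow {R : Type*} [Ring R] (h2 : (2 : R) = 0) (N : R) (k : ℕ) :
    (1 + N) ^ 2 ^ k = 1 + N ^ 2 ^ k := by
  induction k with
  | zero => simp
  | succ k ih =>
    rw [pow_succ, pow_mul, ih, (Commute.one_left _).add_sq, ← pow_mul, mul_one, one_pow, h2]
    simp

namespace Matrix

variable {ι R : Type*}

def SupportedAbove [Zero R] (h : ι → ℕ) (k : ℕ) (X : Matrix ι ι R) : Prop :=
  ∀ a b, h b < h a + k → X a b = 0

def flag [Zero R] (h : ι → ℕ) (j : ℕ) : Set (ι → R) := {x | ∀ a, j ≤ h a → x a = 0}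

namespace SupportedAbove

variable {h : ι → ℕ} {k l : ℕ} {X Y : Matrix ι ι R}

theorem mono [Zero R] (hX : SupportedAbove h l X) (hkl : k ≤ l) : SupportedAbove h k X :=
  fun a b hab => hX a b (by omega)

theorem add [AddZeroClass R] (hX : SupportedAbove h k X) (hY : SupportedAbove h k Y) :
    SupportedAbove h k (X + Y) := fun a b hab => by
  rw [add_apply, hX a b hab, hY a b hab, add_zero]

theorem mul [Fintype ι] [NonUnitalNonAssocSemiring R] (hX : SupportedAbove h k X)
    (hY : SupportedAbove h l Y) : SupportedAbove h (k + l) (X * Y) := by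
  intro a b hab
  rw [mul_apply]
  refine Finset.sum_eq_zero fun r _ => ?_
  by_cases hr : h r < h a + k
  · rw [hX a r hr, zero_mul]
  · rw [hY r b (by omega), mul_zero]

theorem pow [Fintype ι] [DecidableEq ι] [Semiring R] (hX : SupportedAbove h 1 X) (m : ℕ) :
    SupportedAbove h m (X ^ m) := by
  induction m with
  | zero => exact fun a b hab => by rw [pow_zero, one_apply_ne (by rintro rfl; omega)]
  | succ m ih => rw [pow_succ]; exact ih.mul hX

theorem eq_zero [Zero R] (hX : SupportedAbove h k X) (hk : ∀ a, h a < k) : X = 0 :=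
  ext fun a b => hX a b (by have := hk b; omega)

theorem pow_eq_zero [Fintype ι] [DecidableEq ι] [Semiring R] (hX : SupportedAbove h 1 X)
    (hk : ∀ a, h a < k) : X ^ k = 0 :=
  (hX.pow k).eq_zero hk

theorem mulVec_mem_flag [Fintype ι] [NonUnitalNonAssocSemiring R] (hX : SupportedAbove h 1 X)
    {j : ℕ} {x : ι → R} (hx : x ∈ flag h (j + 1)) : X *ᵥ x ∈ flag h j := by
  intro a ha
  rw [mulVec, dotProduct]
  refine Finset.sum_eq_zero fun b _ => ?_
  by_cases hb : h b < h a + 1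
  · rw [hX a b hb, zero_mul]
  · rw [hx b (by omega), mul_zero]

end SupportedAbove

variable [Fintype ι] [DecidableEq ι] [Ring R] {h : ι → ℕ}

theorem SupportedAbove.mul_sub_one {A B : Matrix ι ι R} (hA : SupportedAbove h 1 (A - 1))
    (hB : SupportedAbove h 1 (B - 1)) : SupportedAbove h 1 (A * B - 1) := by
  have : A * B - 1 = (A - 1) * (B - 1) + ((A - 1) + (B - 1)) := by noncomm_ring
  rw [this]
  exact ((hA.mul hB).mono (by omega)).add (hA.add hB)

theorem SupportedAbove.pow_two_pow_eq_one (h2 : (2 : R) = 0) {A : Matrix ι ι R} {k : ℕ}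
    (hA : SupportedAbove h 1 (A - 1)) (hk : ∀ a, h a < k) : A ^ 2 ^ k = 1 := by
  have h2' : (2 : Matrix ι ι R) = 0 := by rw [← map_ofNat (scalar ι) 2, h2, map_zero]
  rw [← add_sub_cancel 1 A, one_add_pow_two_pow h2',
    pow_eq_zero_of_le k.lt_two_pow_self.le (hA.pow_eq_zero hk), add_zero]

omit [DecidableEq ι] in
theorem BlockTriangular.mul_apply_self {α : Type*} [LinearOrder α] {b : ι → α}
    (hb : Function.Injective b) {M N : Matrix ι ι R} (hM : M.BlockTriangular b)
    (hN : N.BlockTriangular b) (i : ι) : (M * N) i i = M i i * N i i := by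
  rw [mul_apply]
  refine Finset.sum_eq_single i (fun r _ hri => ?_) (by simp)
  rcases lt_trichotomy (b r) (b i) with hr | hr | hr
  · rw [hM hr, zero_mul]
  · exact absurd (hb hr) hri
  · rw [hN hr, mul_zero]

omit [Fintype ι] in
theorem BlockTriangular.supportedAbove_sub_one (hh : Function.Injective h) {M : Matrix ι ι R}
    (hM : M.BlockTriangular h) (hd : ∀ i, M i i = 1) : SupportedAbove h 1 (M - 1) := by
  intro a b hab
  rcases (Nat.lt_succ_iff.mp hab).lt_or_eq with hlt | heq
  · rw [sub_apply, hM hlt, one_apply_ne (by rintro rfl; omega), sub_zero]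
  · obtain rfl := hh heq
    rw [sub_apply, hd, one_apply_eq, sub_self]

theorem blockTriangular_of_mulVec_mem_flag {M : Matrix ι ι R}
    (hM : ∀ j, ∀ x ∈ flag h j, M *ᵥ x ∈ flag h j) : M.BlockTriangular h := by
  intro p q hqp
  have hq : Pi.single q (1 : R) ∈ flag h (h q + 1) := fun a ha =>
    Pi.single_eq_of_ne (by rintro rfl; omega) _
  simpa [mulVec_single] using hM _ _ hq p hqp

end Matrix

theorem Sum.swap_eq_iff_eq_swap {α β : Type*} {a : α ⊕ β} {b : β ⊕ α} :
    a.swap = b ↔ a = b.swap :=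
  ⟨fun h => h ▸ (Sum.swap_swap a).symm, fun h => h ▸ Sum.swap_swap b⟩

theorem Sum.swap_ne_self {α : Type*} (a : α ⊕ α) : a.swap ≠ a := by
  cases a <;> simp

namespace SymplecticGroup

open Matrix

variable {n : ℕ}

abbrev Sp (n : ℕ) := symplecticGroup (Fin n) (ZMod 2)

def height : Fin n ⊕ Fin n → ℕ := Sum.elim (fun i => i) (fun i => 2 * n - 1 - i)

theorem height_lt (a : Fin n ⊕ Fin n) : height a < 2 * n := by
  cases a with
  | inl i => have := i.2; simp only [height, Sum.elim_inl]; omega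
  | inr i => have := i.2; simp only [height, Sum.elim_inr]; omega

theorem height_add_height_swap (a : Fin n ⊕ Fin n) : height a + height a.swap + 1 = 2 * n := by
  cases a with
  | inl i => have := i.2; simp only [height, Sum.swap_inl, Sum.elim_inl, Sum.elim_inr]; omega
  | inr i => have := i.2; simp only [height, Sum.swap_inr, Sum.elim_inl, Sum.elim_inr]; omega

theorem height_injective : Function.Injective (height (n := n)) := by
  rintro (i | i) (j | j) h <;> simp only [height, Sum.elim_inl, Sum.elim_inr] at h <;>
    have := i.2 <;> have := j.2
  · exact congrArg _ (Fin.ext h)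
  · omega
  · omega
  · exact congrArg _ (Fin.ext (by omega))

theorem exists_height_eq {j : ℕ} (hj : j < 2 * n) : ∃ a : Fin n ⊕ Fin n, height a = j := by
  by_cases h : j < n
  · exact ⟨.inl ⟨j, h⟩, rfl⟩
  · exact ⟨.inr ⟨2 * n - 1 - j, by omega⟩, by simp only [height, Sum.elim_inr]; omega⟩

theorem J_apply (a b : Fin n ⊕ Fin n) : J (Fin n) (ZMod 2) a b = if b = a.swap then 1 else 0 := by
  rcases a with i | i <;> rcases b with j | j <;>
    simp [J, one_apply, ZMod.neg_eq_self_mod_two, eq_comm (a := i)]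

theorem J_mul_apply (Y : Matrix (Fin n ⊕ Fin n) (Fin n ⊕ Fin n) (ZMod 2)) (p q : Fin n ⊕ Fin n) :
    (J (Fin n) (ZMod 2) * Y) p q = Y p.swap q := by
  simp [mul_apply, J_apply]

theorem mul_J_apply (Y : Matrix (Fin n ⊕ Fin n) (Fin n ⊕ Fin n) (ZMod 2)) (p q : Fin n ⊕ Fin n) :
    (Y * J (Fin n) (ZMod 2)) p q = Y p q.swap := by
  simp [mul_apply, J_apply, ← Sum.swap_eq_iff_eq_swap]

-- `E_{ab} + E_{b̄ā}`, written with `∨` so that it is a single matrix unit when `b = ā`.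
def rootMatrix (a b : Fin n ⊕ Fin n) : Matrix (Fin n ⊕ Fin n) (Fin n ⊕ Fin n) (ZMod 2) :=
  of fun p q => if p = a ∧ q = b ∨ p = b.swap ∧ q = a.swap then 1 else 0

theorem rootMatrix_mul_J (a b : Fin n ⊕ Fin n) :
    rootMatrix a b * J (Fin n) (ZMod 2) = J (Fin n) (ZMod 2) * (rootMatrix a b)ᵀ := by
  ext p q
  simp only [mul_J_apply, J_mul_apply, transpose_apply, rootMatrix, of_apply,
    Sum.swap_eq_iff_eq_swap, Sum.swap_swap]
  exact if_congr (by tauto) rfl rfl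

theorem rootMatrix_mul_self {a b : Fin n ⊕ Fin n} (hab : a ≠ b) :
    rootMatrix a b * rootMatrix a b = 0 := by
  ext p q
  simp only [mul_apply, rootMatrix, of_apply, Matrix.zero_apply]
  refine Finset.sum_eq_zero fun r _ => ?_
  split_ifs with hpr hrq <;> try simp
  have ha := Sum.swap_ne_self a
  have hb := Sum.swap_ne_self b
  rcases hpr with ⟨-, rfl⟩ | ⟨-, rfl⟩ <;> rcases hrq with ⟨h, -⟩ | ⟨h, -⟩
  · exact hab h.symm
  · exact hb h.symm
  · exact ha h
  · exact hab (by simpa using congrArg Sum.swap h)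

theorem one_add_rootMatrix_mem {a b : Fin n ⊕ Fin n} (hab : a ≠ b) :
    1 + rootMatrix a b ∈ Sp n := by
  set X := rootMatrix a b
  have hJ : J (Fin n) (ZMod 2) * Xᵀ = X * J (Fin n) (ZMod 2) := (rootMatrix_mul_J a b).symm
  rw [SymplecticGroup.mem_iff, transpose_add, transpose_one]
  calc (1 + X) * J (Fin n) (ZMod 2) * (1 + Xᵀ)
      = J (Fin n) (ZMod 2) + (X * J (Fin n) (ZMod 2) + J (Fin n) (ZMod 2) * Xᵀ)
        + X * (J (Fin n) (ZMod 2) * Xᵀ) := by noncomm_ring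
    _ = J (Fin n) (ZMod 2) := by
      rw [hJ, ← mul_assoc, rootMatrix_mul_self hab, zero_mul, add_zero, add_eq_left]
      exact ext fun i j => CharTwo.add_self_eq_zero _

def rootElement {a b : Fin n ⊕ Fin n} (h : height a < height b) : Sp n :=
  ⟨1 + rootMatrix a b, one_add_rootMatrix_mem (ne_of_apply_ne height h.ne)⟩

theorem rootElement_sq {a b : Fin n ⊕ Fin n} (h : height a < height b) :
    rootElement h ^ 2 = 1 := by
  have hX := rootMatrix_mul_self (ne_of_apply_ne height h.ne)
  refine Subtype.ext ?_
  calc (1 + rootMatrix a b) ^ 2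
      = 1 + (rootMatrix a b + rootMatrix a b) + rootMatrix a b * rootMatrix a b := by noncomm_ring
    _ = 1 := by rw [hX, add_zero, add_eq_left]; exact ext fun i j => CharTwo.add_self_eq_zero _

theorem rootMatrix_supportedAbove {a b : Fin n ⊕ Fin n} {k : ℕ} (h : height a + k ≤ height b) :
    SupportedAbove height k (rootMatrix a b) := by
  intro p q hpq
  have := height_add_height_swap a
  have := height_add_height_swap b
  simp only [rootMatrix, of_apply, ite_eq_right_iff, one_ne_zero, imp_false]
  rintro (⟨rfl, rfl⟩ | ⟨rfl, rfl⟩) <;> omega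

theorem rootMatrix_apply_left (a b q : Fin n ⊕ Fin n) :
    rootMatrix a b a q = if q = b then 1 else 0 := by
  simp only [rootMatrix, of_apply, true_and]
  refine if_congr ⟨?_, .inl⟩ rfl rfl
  rintro (h | ⟨h, rfl⟩)
  · exact h
  · rw [← Sum.swap_eq_iff_eq_swap] at h; exact h

def unitriangular (n : ℕ) : Subgroup (Sp n) where
  carrier := {M | SupportedAbove height 1 (M.1 - 1)}
  mul_mem' := SupportedAbove.mul_sub_one
  one_mem' := by simp [SupportedAbove]
  inv_mem' {M} hM p q hpq := by
    have := height_add_height_swap p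
    have := height_add_height_swap q
    have hinv : (M⁻¹ : Sp n).1 - 1 = -(J (Fin n) (ZMod 2) * (M.1 - 1)ᵀ * J (Fin n) (ZMod 2)) := by
      rw [SymplecticGroup.coe_inv, transpose_sub, transpose_one, mul_sub, sub_mul, mul_one,
        J_squared]
      noncomm_ring
    rw [hinv, Matrix.neg_apply, mul_J_apply, J_mul_apply, transpose_apply,
      hM q.swap p.swap (by omega), neg_zero]

theorem isPGroup_unitriangular : IsPGroup 2 (unitriangular n) := fun M =>
  ⟨2 * n, Subtype.ext <| Subtype.ext <| by
    simpa using M.2.pow_two_pow_eq_one (by decide) height_lt⟩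

theorem rootElement_mem_unitriangular {a b : Fin n ⊕ Fin n} (h : height a < height b) :
    rootElement h ∈ unitriangular n := by
  show SupportedAbove height 1 (1 + rootMatrix a b - 1)
  rw [add_sub_cancel_left]
  exact rootMatrix_supportedAbove h

theorem mem_flag_succ_iff {j : ℕ} {x : Fin n ⊕ Fin n → ZMod 2} :
    x ∈ flag height (j + 1) ↔ ∀ M ∈ unitriangular n, (M.1 - 1) *ᵥ x ∈ flag height j := by
  refine ⟨fun hx M hM => hM.mulVec_mem_flag hx, fun hx => ?_⟩
  by_contra hx'
  obtain ⟨a, ha, hxa⟩ : ∃ a, j + 1 ≤ height a ∧ x a ≠ 0 := by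
    simpa only [flag, Set.mem_ofPred_eq, not_forall, exists_prop] using hx'
  obtain ⟨b, rfl⟩ := exists_height_eq (show j < 2 * n by have := height_lt a; omega)
  have hba : height b < height a := by omega
  have := hx _ (rootElement_mem_unitriangular hba) b le_rfl
  simp [rootElement, mulVec, dotProduct, rootMatrix_apply_left] at this
  exact hxa this

theorem mulVec_mem_flag_of_mem_normalizer {g : Sp n}
    (hg : g ∈ Subgroup.normalizer (unitriangular n : Set (Sp n))) (j : ℕ) :
    ∀ x ∈ flag height j, g.1 *ᵥ x ∈ flag height j := by
  induction j with
  | zero =>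
    intro x hx
    rw [show x = 0 from funext fun a => hx a (Nat.zero_le _), mulVec_zero]
    exact fun _ _ => rfl
  | succ j ih =>
    intro x hx
    rw [mem_flag_succ_iff] at hx ⊢
    intro M hM
    have hM' : g⁻¹ * M * g ∈ unitriangular n := by
      simpa using (Subgroup.mem_normalizer_iff.mp (inv_mem hg) M).mp hM
    have hconj : (M.1 - 1) * g.1 = g.1 * ((g⁻¹ * M * g).1 - 1) := by
      have : g.1 * (g⁻¹ * M * g).1 = M.1 * g.1 := by
        rw [← MulMemClass.coe_mul, ← MulMemClass.coe_mul]; congr 1; group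
      rw [mul_sub, this, sub_mul, mul_one, one_mul]
    rw [mulVec_mulVec, hconj, ← mulVec_mulVec]
    exact ih _ (hx _ hM')

theorem normalizer_unitriangular_le :
    Subgroup.normalizer (unitriangular n : Set (Sp n)) ≤ unitriangular n := by
  have hT : ∀ g ∈ Subgroup.normalizer (unitriangular n : Set (Sp n)), g.1.BlockTriangular height :=
    fun g hg => blockTriangular_of_mulVec_mem_flag (mulVec_mem_flag_of_mem_normalizer hg)
  intro g hg
  refine (hT g hg).supportedAbove_sub_one height_injective fun p => ?_
  have hp := (hT _ (inv_mem hg)).mul_apply_self height_injective (hT g hg) p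
  rw [← MulMemClass.coe_mul, inv_mul_cancel, OneMemClass.coe_one, one_apply_eq] at hp
  exact ZMod.eq_one_of_ne_zero (right_ne_zero_of_mul_eq_one hp.symm)

def rootElements (n : ℕ) : Set (Sp n) :=
  {g | ∃ (a b : Fin n ⊕ Fin n) (h : height a < height b), rootElement h = g}

theorem closure_rootElements_le : Subgroup.closure (rootElements n) ≤ unitriangular n :=
  (Subgroup.closure_le _).mpr fun _ ⟨_, _, h, hg⟩ => hg ▸ rootElement_mem_unitriangular h

theorem sub_one_apply_swap {M : Sp n} {k : ℕ} (hk : 1 ≤ k)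
    (hM : SupportedAbove height k (M.1 - 1)) {a b : Fin n ⊕ Fin n}
    (hab : height b = height a + k) : (M.1 - 1) b.swap a.swap = (M.1 - 1) a b := by
  have hrel : (M.1 - 1) * J (Fin n) (ZMod 2) + J (Fin n) (ZMod 2) * (M.1 - 1)ᵀ
      + (M.1 - 1) * J (Fin n) (ZMod 2) * (M.1 - 1)ᵀ = 0 := by
    calc _ = M.1 * J (Fin n) (ZMod 2) * M.1ᵀ - J (Fin n) (ZMod 2) := by
          rw [transpose_sub, transpose_one]; noncomm_ring
      _ = 0 := by rw [SymplecticGroup.mem_iff.mp M.2, sub_self]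
  set N := M.1 - 1
  have hquad : (N * J (Fin n) (ZMod 2) * Nᵀ) a b.swap = 0 := by
    rw [mul_apply]
    refine Finset.sum_eq_zero fun r _ => ?_
    rw [mul_J_apply, transpose_apply]
    by_cases hr : height r.swap < height a + k
    · rw [hM a _ hr, zero_mul]
    · have := height_add_height_swap r
      have := height_add_height_swap b
      rw [hM b.swap r (by omega), mul_zero]
  have := congrFun (congrFun hrel a) b.swap
  rw [Matrix.add_apply, Matrix.add_apply, hquad, add_zero, mul_J_apply, J_mul_apply,
    transpose_apply, Sum.swap_swap, Matrix.zero_apply] at this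
  exact (CharTwo.add_eq_zero.mp this).symm

theorem rootElement_mul_sub_one {a b : Fin n ⊕ Fin n} (h : height a < height b) (M : Sp n) :
    (rootElement h * M).1 - 1 = (M.1 - 1) + rootMatrix a b + rootMatrix a b * (M.1 - 1) := by
  show (1 + rootMatrix a b) * M.1 - 1 = _
  noncomm_ring

theorem rootElement_mul_clear {k : ℕ} (hk : 1 ≤ k) {M : Sp n}
    (hM : SupportedAbove height k (M.1 - 1)) {a b : Fin n ⊕ Fin n}
    (hab : height b = height a + k) (hMab : (M.1 - 1) a b ≠ 0) {s : Finset _}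
    (hMs : ∀ p q, height q = height p + k → (p, q) ∉ insert (a, b) s → (M.1 - 1) p q = 0) :
    SupportedAbove height k ((rootElement (show height a < height b by omega) * M).1 - 1) ∧
      ∀ p q, height q = height p + k → (p, q) ∉ s →
        ((rootElement (show height a < height b by omega) * M).1 - 1) p q = 0 := by
  have hX : SupportedAbove height k (rootMatrix a b) := rootMatrix_supportedAbove hab.ge
  have hXM : SupportedAbove height (k + 1) (rootMatrix a b * (M.1 - 1)) :=
    (hX.mul hM).mono (by omega)
  rw [rootElement_mul_sub_one]
  refine ⟨(hM.add hX).add (hXM.mono (by omega)), fun p q hpq hps => ?_⟩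
  rw [Matrix.add_apply, Matrix.add_apply, hXM p q (by omega), add_zero]
  by_cases hXpq : rootMatrix a b p q = 0
  · refine hXpq ▸ (add_zero _).trans (hMs p q hpq fun h => ?_)
    rcases Finset.mem_insert.mp h with hpq' | hps'
    · obtain ⟨rfl, rfl⟩ := Prod.mk.inj hpq'
      simp [rootMatrix_apply_left] at hXpq
    · exact hps hps'
  · have hN : (M.1 - 1) p q = (M.1 - 1) a b := by
      simp only [rootMatrix, of_apply, ite_eq_right_iff, one_ne_zero, imp_false, not_not] at hXpq
      rcases hXpq with ⟨rfl, rfl⟩ | ⟨rfl, rfl⟩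
      · rfl
      · exact sub_one_apply_swap hk hM hab
    rw [hN, ZMod.eq_one_of_ne_zero hMab, ZMod.eq_one_of_ne_zero hXpq]
    exact CharTwo.add_self_eq_zero 1

theorem mem_closure_of_supportedAbove {k : ℕ} (hk : 1 ≤ k)
    (ih : ∀ M : Sp n, SupportedAbove height (k + 1) (M.1 - 1) →
      M ∈ Subgroup.closure (rootElements n))
    {M : Sp n} (hM : SupportedAbove height k (M.1 - 1)) :
    M ∈ Subgroup.closure (rootElements n) := by
  suffices ∀ (s : Finset ((Fin n ⊕ Fin n) × (Fin n ⊕ Fin n))) (M : Sp n),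
      SupportedAbove height k (M.1 - 1) →
      (∀ p q, height q = height p + k → (p, q) ∉ s → (M.1 - 1) p q = 0) →
      M ∈ Subgroup.closure (rootElements n) from
    this Finset.univ M hM fun p q _ h => absurd (Finset.mem_univ _) h
  intro s
  induction s using Finset.induction_on with
  | empty =>
    refine fun M hM hM0 => ih M fun p q hpq => ?_
    rcases (Nat.lt_succ_iff.mp hpq).lt_or_eq with h | h
    · exact hM p q h
    · exact hM0 p q h (Finset.notMem_empty _)
  | insert ab s _ ihs =>
    obtain ⟨a, b⟩ := ab
    intro M hM hMs
    by_cases hMab : height b = height a + k ∧ (M.1 - 1) a b ≠ 0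
    · obtain ⟨hab, hMab⟩ := hMab
      obtain ⟨hsupp, hclear⟩ := rootElement_mul_clear hk hM hab hMab hMs
      set E := rootElement (show height a < height b by omega)
      have hE : E ∈ Subgroup.closure (rootElements n) := Subgroup.subset_closure ⟨a, b, _, rfl⟩
      have : M = E * (E * M) := by rw [← mul_assoc, ← sq, rootElement_sq, one_mul]
      rw [this]
      exact mul_mem hE (ihs _ hsupp hclear)
    · refine ihs M hM fun p q hpq hps => ?_
      by_cases hpq' : (p, q) = (a, b)
      · obtain ⟨rfl, rfl⟩ := Prod.mk.inj hpq'
        by_contra h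
        exact hMab ⟨hpq, h⟩
      · exact hMs p q hpq (by simp [hps, hpq'])

theorem unitriangular_le_closure : unitriangular n ≤ Subgroup.closure (rootElements n) := by
  suffices ∀ j k, 2 * n ≤ k + j → 1 ≤ k → ∀ M : Sp n, SupportedAbove height k (M.1 - 1) →
      M ∈ Subgroup.closure (rootElements n) from
    fun M hM => this (2 * n) 1 (by omega) le_rfl M hM
  intro j
  induction j with
  | zero =>
    intro k hk _ M hM
    have : M = 1 :=
      Subtype.ext (sub_eq_zero.mp (hM.eq_zero fun a => by have := height_lt a; omega))
    exact this ▸ one_mem _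
  | succ j ih =>
    exact fun k hk hk1 M hM =>
      mem_closure_of_supportedAbove hk1 (ih (k + 1) (by omega) (by omega)) hM

theorem unitriangular_eq_closure : unitriangular n = Subgroup.closure (rootElements n) :=
  le_antisymm unitriangular_le_closure closure_rootElements_le

def unitriangularSylow (n : ℕ) : Sylow 2 (Sp n) :=
  isPGroup_unitriangular.toSylowOfNormalizerLE normalizer_unitriangular_le

end SymplecticGroup

theorem sylow_two_symplectic_hom_values_general (n : ℕ)
    (R : Sylow 2 (Matrix.symplecticGroup (Fin n) (ZMod 2)))
    (f : R →* ℂˣ) (x : R) :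
    f x = 1 ∨ f x = -1 := by
  suffices hsq : f x ^ 2 = 1 by
    have : ((f x : ℂˣ) : ℂ) ^ 2 = 1 := by rw [← Units.val_pow_eq_pow_val, hsq, Units.val_one]
    exact (sq_eq_one_iff.mp this).imp Units.ext Units.ext
  let U := SymplecticGroup.unitriangularSylow n
  obtain ⟨g, rfl⟩ := MulAction.exists_smul_eq (Matrix.symplecticGroup (Fin n) (ZMod 2)) U R
  obtain ⟨y, rfl⟩ := (U.equivSMul g).surjective x
  exact Subgroup.map_sq_eq_one_of_eq_closure SymplecticGroup.unitriangular_eq_closure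
    (by rintro _ ⟨a, b, h, rfl⟩; exact SymplecticGroup.rootElement_sq h)
    (f.comp (U.equivSMul g).toMonoidHom) y

/-- Let `n ≥ 1` and let `R` be a Sylow `2`-subgroup of `Sp_{2n}(𝔽₂)`. Then every group
homomorphism from `R` to `ℂˣ` takes values in `{1, -1}`. -/
theorem sylow_two_symplectic_hom_values (n : ℕ) (hn : 1 ≤ n)
    (R : Sylow 2 (Matrix.symplecticGroup (Fin n) (ZMod 2)))
    (f : R →* ℂˣ) (x : R) :
    f x = 1 ∨ f x = -1 :=
  sylow_two_symplectic_hom_values_general n R f x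
end

section
/- Let n ≥ 1. Let SymM_n(2) be the additive group of symmetric n×n matrices over F_2, let U_n(2) be the group (under matrix multiplication) of upper unitriangular n×n matrices over F_2, acting on SymM_n(2) by x • s = x * s * xᵀ. Then the semidirect product SymM_n(2) ⋊ U_n(2) with respect to this action is isomorphic, as a group, to a Sylow 2-subgroup of Sp_{2n}(F_2). -/
open Matrix

/-- The additive group of symmetric `n × n` matrices over `𝔽₂`. -/
def SymM (n : ℕ) : AddSubgroup (Matrix (Fin n) (Fin n) (ZMod 2)) where
  carrier := {A | Aᵀ = A}
  add_mem' := by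
    intro a b ha hb
    simp only [Set.mem_setOf_eq] at *
    rw [Matrix.transpose_add, ha, hb]
  zero_mem' := by simp
  neg_mem' := by
    intro a ha
    simp only [Set.mem_setOf_eq] at *
    rw [Matrix.transpose_neg, ha]

@[simp] lemma mem_SymM_iff {n : ℕ} {A : Matrix (Fin n) (Fin n) (ZMod 2)} :
    A ∈ SymM n ↔ Aᵀ = A := Iff.rfl

/-- The group of upper unitriangular `n × n` matrices over `𝔽₂`, as a subgroup of `GL`. -/
def Unitri (n : ℕ) : Subgroup (GL (Fin n) (ZMod 2)) where
  carrier := {M | (∀ i, (M : Matrix (Fin n) (Fin n) (ZMod 2)) i i = 1) ∧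
      ∀ i j : Fin n, j < i → (M : Matrix (Fin n) (Fin n) (ZMod 2)) i j = 0}
  one_mem' := by
    refine ⟨fun i => by simp, fun i j hij => ?_⟩
    simpa using Matrix.one_apply_ne (ne_of_gt hij)
  mul_mem' := by
    rintro a b ⟨ha1, ha2⟩ ⟨hb1, hb2⟩
    refine ⟨fun i => ?_, fun i j hij => ?_⟩
    · show ((a * b : GL (Fin n) (ZMod 2)) : Matrix (Fin n) (Fin n) (ZMod 2)) i i = 1
      rw [Units.val_mul, Matrix.mul_apply, Finset.sum_eq_single i]
      · rw [ha1, hb1, one_mul]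
      · intro k _ hk
        rcases lt_or_gt_of_ne hk with h | h
        · rw [ha2 i k h, zero_mul]
        · rw [hb2 k i h, mul_zero]
      · intro h; exact absurd (Finset.mem_univ i) h
    · show ((a * b : GL (Fin n) (ZMod 2)) : Matrix (Fin n) (Fin n) (ZMod 2)) i j = 0
      rw [Units.val_mul, Matrix.mul_apply]
      apply Finset.sum_eq_zero
      intro k _
      rcases lt_or_ge k i with h | h
      · rw [ha2 i k h, zero_mul]
      · rw [hb2 k j (lt_of_lt_of_le hij h), mul_zero]
  inv_mem' := by
    rintro a ⟨ha1, ha2⟩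
    have htri : (↑a : Matrix (Fin n) (Fin n) (ZMod 2)).BlockTriangular id :=
      fun i j h => ha2 i j h
    haveI : Invertible (↑a : Matrix (Fin n) (Fin n) (ZMod 2)) := a.invertible
    have hcoe : ((↑(a⁻¹) : Matrix (Fin n) (Fin n) (ZMod 2))) =
        (↑a : Matrix (Fin n) (Fin n) (ZMod 2))⁻¹ := Matrix.coe_units_inv a
    have hinv : ((↑(a⁻¹) : Matrix (Fin n) (Fin n) (ZMod 2))).BlockTriangular id := by
      rw [hcoe]; exact Matrix.blockTriangular_inv_of_blockTriangular htri
    refine ⟨fun i => ?_, fun i j hij => hinv hij⟩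
    have h1 : ((↑(a⁻¹) : Matrix (Fin n) (Fin n) (ZMod 2)) *
        (↑a : Matrix (Fin n) (Fin n) (ZMod 2))) i i = 1 := by
      rw [← Units.val_mul, inv_mul_cancel a, Units.val_one, Matrix.one_apply_eq]
    rw [Matrix.mul_apply, Finset.sum_eq_single i] at h1
    · rwa [ha1, mul_one] at h1
    · intro k _ hk
      rcases lt_or_gt_of_ne hk with h | h
      · rw [hinv (show (id k : Fin n) < id i from h), zero_mul]
      · rw [ha2 k i h, mul_zero]
    · intro h; exact absurd (Finset.mem_univ i) h

lemma conj_mem_SymM {n : ℕ} (x : Matrix (Fin n) (Fin n) (ZMod 2))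
    {s : Matrix (Fin n) (Fin n) (ZMod 2)} (hs : s ∈ SymM n) : x * s * xᵀ ∈ SymM n := by
  simp only [mem_SymM_iff] at hs ⊢
  rw [Matrix.transpose_mul, Matrix.transpose_mul, Matrix.transpose_transpose, hs,
    Matrix.mul_assoc]

/-- The map `s ↦ x s xᵀ` as an additive automorphism of the symmetric matrices. -/
def symConj {n : ℕ} (x : GL (Fin n) (ZMod 2)) : SymM n ≃+ SymM n where
  toFun s := ⟨(x : Matrix (Fin n) (Fin n) (ZMod 2)) * (↑s : Matrix (Fin n) (Fin n) (ZMod 2)) *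
      (x : Matrix (Fin n) (Fin n) (ZMod 2))ᵀ, conj_mem_SymM _ s.2⟩
  invFun s := ⟨((x⁻¹ : GL (Fin n) (ZMod 2)) : Matrix (Fin n) (Fin n) (ZMod 2)) *
      (↑s : Matrix (Fin n) (Fin n) (ZMod 2)) *
      ((x⁻¹ : GL (Fin n) (ZMod 2)) : Matrix (Fin n) (Fin n) (ZMod 2))ᵀ, conj_mem_SymM _ s.2⟩
  left_inv s := by
    apply Subtype.ext
    have h1 : ((x⁻¹ : GL (Fin n) (ZMod 2)) : Matrix (Fin n) (Fin n) (ZMod 2)) *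
        (x : Matrix (Fin n) (Fin n) (ZMod 2)) = 1 := Units.inv_mul x
    have h2 : ((x : Matrix (Fin n) (Fin n) (ZMod 2)))ᵀ *
        ((x⁻¹ : GL (Fin n) (ZMod 2)) : Matrix (Fin n) (Fin n) (ZMod 2))ᵀ = 1 := by
      rw [← Matrix.transpose_mul, Units.inv_mul, Matrix.transpose_one]
    show ((x⁻¹ : GL (Fin n) (ZMod 2)) : Matrix (Fin n) (Fin n) (ZMod 2)) *
        ((x : Matrix (Fin n) (Fin n) (ZMod 2)) * (↑s : Matrix (Fin n) (Fin n) (ZMod 2)) *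
          (x : Matrix (Fin n) (Fin n) (ZMod 2))ᵀ) *
        ((x⁻¹ : GL (Fin n) (ZMod 2)) : Matrix (Fin n) (Fin n) (ZMod 2))ᵀ =
        (↑s : Matrix (Fin n) (Fin n) (ZMod 2))
    calc ((x⁻¹ : GL (Fin n) (ZMod 2)) : Matrix (Fin n) (Fin n) (ZMod 2)) *
        ((x : Matrix (Fin n) (Fin n) (ZMod 2)) * (↑s : Matrix (Fin n) (Fin n) (ZMod 2)) *
          (x : Matrix (Fin n) (Fin n) (ZMod 2))ᵀ) *
        ((x⁻¹ : GL (Fin n) (ZMod 2)) : Matrix (Fin n) (Fin n) (ZMod 2))ᵀ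
        = (((x⁻¹ : GL (Fin n) (ZMod 2)) : Matrix (Fin n) (Fin n) (ZMod 2)) *
          (x : Matrix (Fin n) (Fin n) (ZMod 2))) * (↑s : Matrix (Fin n) (Fin n) (ZMod 2)) *
          ((x : Matrix (Fin n) (Fin n) (ZMod 2))ᵀ *
          ((x⁻¹ : GL (Fin n) (ZMod 2)) : Matrix (Fin n) (Fin n) (ZMod 2))ᵀ) := by
          simp only [Matrix.mul_assoc]
      _ = (↑s : Matrix (Fin n) (Fin n) (ZMod 2)) := by rw [h1, h2, one_mul, mul_one]
  right_inv s := by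
    apply Subtype.ext
    have h1 : (x : Matrix (Fin n) (Fin n) (ZMod 2)) *
        ((x⁻¹ : GL (Fin n) (ZMod 2)) : Matrix (Fin n) (Fin n) (ZMod 2)) = 1 := Units.mul_inv x
    have h2 : (((x⁻¹ : GL (Fin n) (ZMod 2)) : Matrix (Fin n) (Fin n) (ZMod 2)))ᵀ *
        ((x : Matrix (Fin n) (Fin n) (ZMod 2)))ᵀ = 1 := by
      rw [← Matrix.transpose_mul, Units.mul_inv, Matrix.transpose_one]
    show (x : Matrix (Fin n) (Fin n) (ZMod 2)) *
        (((x⁻¹ : GL (Fin n) (ZMod 2)) : Matrix (Fin n) (Fin n) (ZMod 2)) *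
          (↑s : Matrix (Fin n) (Fin n) (ZMod 2)) *
          ((x⁻¹ : GL (Fin n) (ZMod 2)) : Matrix (Fin n) (Fin n) (ZMod 2))ᵀ) *
        ((x : Matrix (Fin n) (Fin n) (ZMod 2)))ᵀ = (↑s : Matrix (Fin n) (Fin n) (ZMod 2))
    calc (x : Matrix (Fin n) (Fin n) (ZMod 2)) *
        (((x⁻¹ : GL (Fin n) (ZMod 2)) : Matrix (Fin n) (Fin n) (ZMod 2)) *
          (↑s : Matrix (Fin n) (Fin n) (ZMod 2)) *
          ((x⁻¹ : GL (Fin n) (ZMod 2)) : Matrix (Fin n) (Fin n) (ZMod 2))ᵀ) *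
        ((x : Matrix (Fin n) (Fin n) (ZMod 2)))ᵀ
        = ((x : Matrix (Fin n) (Fin n) (ZMod 2)) *
          ((x⁻¹ : GL (Fin n) (ZMod 2)) : Matrix (Fin n) (Fin n) (ZMod 2))) *
          (↑s : Matrix (Fin n) (Fin n) (ZMod 2)) *
          (((x⁻¹ : GL (Fin n) (ZMod 2)) : Matrix (Fin n) (Fin n) (ZMod 2))ᵀ *
          ((x : Matrix (Fin n) (Fin n) (ZMod 2)))ᵀ) := by
          simp only [Matrix.mul_assoc]
      _ = (↑s : Matrix (Fin n) (Fin n) (ZMod 2)) := by rw [h1, h2, one_mul, mul_one]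
  map_add' s t := by
    apply Subtype.ext
    show (x : Matrix (Fin n) (Fin n) (ZMod 2)) *
        ((↑s : Matrix (Fin n) (Fin n) (ZMod 2)) + (↑t : Matrix (Fin n) (Fin n) (ZMod 2))) *
        (x : Matrix (Fin n) (Fin n) (ZMod 2))ᵀ = _
    simp [Matrix.mul_add, Matrix.add_mul]

lemma symConj_one (n : ℕ) : symConj (1 : GL (Fin n) (ZMod 2)) = AddEquiv.refl (SymM n) := by
  refine AddEquiv.ext fun s => ?_
  apply Subtype.ext
  show ((1 : GL (Fin n) (ZMod 2)) : Matrix (Fin n) (Fin n) (ZMod 2)) *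
      (↑s : Matrix (Fin n) (Fin n) (ZMod 2)) *
      ((1 : GL (Fin n) (ZMod 2)) : Matrix (Fin n) (Fin n) (ZMod 2))ᵀ =
      (↑s : Matrix (Fin n) (Fin n) (ZMod 2))
  simp

lemma symConj_mul {n : ℕ} (x y : GL (Fin n) (ZMod 2)) :
    symConj (x * y) = (symConj y).trans (symConj x) := by
  refine AddEquiv.ext fun s => ?_
  apply Subtype.ext
  show ((x * y : GL (Fin n) (ZMod 2)) : Matrix (Fin n) (Fin n) (ZMod 2)) *
      (↑s : Matrix (Fin n) (Fin n) (ZMod 2)) *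
      ((x * y : GL (Fin n) (ZMod 2)) : Matrix (Fin n) (Fin n) (ZMod 2))ᵀ =
      (x : Matrix (Fin n) (Fin n) (ZMod 2)) *
      ((y : Matrix (Fin n) (Fin n) (ZMod 2)) * (↑s : Matrix (Fin n) (Fin n) (ZMod 2)) *
        (y : Matrix (Fin n) (Fin n) (ZMod 2))ᵀ) *
      (x : Matrix (Fin n) (Fin n) (ZMod 2))ᵀ
  simp [Units.val_mul, Matrix.transpose_mul, Matrix.mul_assoc]

/-- The action of invertible matrices on (multiplicatively written) symmetric matrices
by `x • s = x * s * xᵀ`. -/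
def glSymAction (n : ℕ) : GL (Fin n) (ZMod 2) →* MulAut (Multiplicative (SymM n)) where
  toFun x := AddEquiv.toMultiplicative (symConj x)
  map_one' := by
    refine MulEquiv.ext fun s => ?_
    show AddEquiv.toMultiplicative (symConj (1 : GL (Fin n) (ZMod 2))) s = s
    rw [symConj_one]
    rfl
  map_mul' x y := by
    refine MulEquiv.ext fun s => ?_
    show AddEquiv.toMultiplicative (symConj (x * y)) s = _
    rw [symConj_mul]
    rfl

/-- The action of the unitriangular group `U_n(2)` on the (multiplicatively written)
additive group of symmetric matrices, given by `x • s = x * s * xᵀ`. -/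
def unitriAction (n : ℕ) : Unitri n →* MulAut (Multiplicative (SymM n)) :=
  (glSymAction n).comp (Unitri n).subtype


/-!
Write `e₀` and `f₀` for the first basis vectors of the two Lagrangian halves of `𝔽₂^{2n}`.
Sending `(s, x)` to `[[1, s], [0, 1]] * [[x, 0], [0, x⁻ᵀ]]` is an injective homomorphism into
`Sp_{2n}(𝔽₂)`; its image `P` is a `2`-group because `SymM_n(2)` is elementary abelian and
`U_n(2)` consists of unipotent matrices. It remains to see that `P` is a maximal `2`-subgroup.
Let `Q ⊇ P` be a `2`-group. It fixes a nonzero vector, since `𝔽₂^{2n}` has even cardinality and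
`0` is fixed, and the only nonzero vector fixed by `P` is `e₀`; so `Q` fixes `e₀` and, being
symplectic, has `f₀ᵀ` as a fixed row. Deleting the `e₀`- and `f₀`-coordinates is then a
homomorphism from the stabiliser of `e₀` to `Sp_{2n-2}(𝔽₂)`, mapping `P` onto the corresponding
group of rank `n - 1` and `Q` to a `2`-group. By induction the image of `Q` lies in that group,
and the elements of the stabiliser with trivial image lie in `P`, so `Q = P`.
-/

theorem IsPGroup.semidirectProduct {p : ℕ} {N G : Type*} [Group N] [Group G]
    {φ : G →* MulAut N} (hN : IsPGroup p N) (hG : IsPGroup p G) : IsPGroup p (N ⋊[φ] G) := by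
  have hker : IsPGroup p (SemidirectProduct.rightHom : N ⋊[φ] G →* G).ker := by
    rw [← SemidirectProduct.range_inl_eq_ker_rightHom]
    exact hN.of_surjective _ (MonoidHom.rangeRestrict_surjective _)
  have htop := (hG.of_equiv Subgroup.topEquiv.symm).comap_of_ker_isPGroup _ hker
  rw [Subgroup.comap_top] at htop
  exact htop.of_equiv Subgroup.topEquiv

theorem pow_prime_pow_eq_one_of_sub_one_pow_eq_zero {R : Type*} [Ring R] {p : ℕ} [Fact p.Prime]
    [CharP R p] {x : R} {k : ℕ} (h : (x - 1) ^ k = 0) : x ^ p ^ k = 1 := by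
  have hk : k ≤ p ^ k := (Nat.lt_pow_self (Fact.out : p.Prime).one_lt).le
  rw [← sub_add_cancel x 1, add_pow_char_pow_of_commute p k (Commute.one_right _), one_pow,
    pow_eq_zero_of_le hk h, zero_add]

namespace Matrix

variable {ι κ l m n o α : Type*}

theorem pow_card_eq_zero_of_isUpperTriangular {R : Type*} [CommRing R] [Fintype ι]
    [DecidableEq ι] [LinearOrder ι] {N : Matrix ι ι R} (hN : N.IsUpperTriangular)
    (hdiag : ∀ i, N i i = 0) : N ^ Fintype.card ι = 0 := by
  simpa [charpoly_of_isUpperTriangular N hN, hdiag] using aeval_self_charpoly N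

theorem submatrix_mul_of_injective [Fintype ι] [Fintype κ] [NonUnitalNonAssocSemiring α]
    (M : Matrix m ι α) (N : Matrix ι n α) (e₁ : l → m) {e₂ : κ → ι}
    (he₂ : Function.Injective e₂) (e₃ : o → n)
    (h : ∀ i j, ∀ K ∉ Set.range e₂, M (e₁ i) K * N K (e₃ j) = 0) :
    (M * N).submatrix e₁ e₃ = M.submatrix e₁ e₂ * N.submatrix e₂ e₃ := by
  ext i j
  exact (Fintype.sum_of_injective e₂ he₂ _ _ (h i j) fun _ => rfl).symm

theorem fromBlocks_submatrix_sumMap {l' m' n' o' : Type*} (A : Matrix n l α) (B : Matrix n m α)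
    (C : Matrix o l α) (D : Matrix o m α) (f : n' → n) (g : o' → o) (h : l' → l) (k : m' → m) :
    (fromBlocks A B C D).submatrix (Sum.map f g) (Sum.map h k) =
      fromBlocks (A.submatrix f h) (B.submatrix f k) (C.submatrix g h) (D.submatrix g k) := by
  ext (i | i) (j | j) <;> rfl

section ExtendSucc

variable {R : Type*} [Semiring R] {k : ℕ}

def extendSucc (A : Matrix (Fin k) (Fin k) R) : Matrix (Fin (k + 1)) (Fin (k + 1)) R :=
  of (vecCons (vecCons 1 0) fun i => vecCons 0 (A i))

variable (A B : Matrix (Fin k) (Fin k) R)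

@[simp] theorem extendSucc_zero_zero : extendSucc A 0 0 = 1 := rfl

@[simp] theorem extendSucc_zero_succ (j : Fin k) : extendSucc A 0 j.succ = 0 := rfl

@[simp] theorem extendSucc_succ_zero (i : Fin k) : extendSucc A i.succ 0 = 0 := rfl

@[simp] theorem extendSucc_succ_succ (i j : Fin k) : extendSucc A i.succ j.succ = A i j := rfl

theorem transpose_extendSucc : (extendSucc A)ᵀ = extendSucc Aᵀ := by
  ext i j
  induction i using Fin.cases <;> induction j using Fin.cases <;> rfl

theorem extendSucc_mul : extendSucc (A * B) = extendSucc A * extendSucc B := by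
  ext i j
  induction i using Fin.cases <;> induction j using Fin.cases <;>
    simp [mul_apply, Fin.sum_univ_succ]

variable (R k) in
def extendSuccHom : Matrix (Fin k) (Fin k) R →* Matrix (Fin (k + 1)) (Fin (k + 1)) R where
  toFun := extendSucc
  map_one' := by
    ext i j
    induction i using Fin.cases <;> induction j using Fin.cases <;>
      simp [one_apply, (Fin.succ_ne_zero _).symm]
  map_mul' := extendSucc_mul

end ExtendSucc

end Matrix

namespace SymplecticGroup

open Matrix

section Blocks

variable {l R : Type*} [DecidableEq l] [CommRing R]

theorem J_col_inl (i : l) : (J l R).col (Sum.inl i) = Pi.single (Sum.inr i) 1 := by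
  ext (j | j) <;> simp [J, Pi.single_apply, one_apply, eq_comm]

variable [Fintype l]

theorem J_mul_apply_inr (B : Matrix (l ⊕ l) (l ⊕ l) R) (i : l) (k : l ⊕ l) :
    (J l R * B) (Sum.inr i) k = B (Sum.inl i) k := by
  simp [J, mul_apply, Fintype.sum_sum_type, one_apply]

theorem transpose_mulVec_J_mulVec {A : Matrix (l ⊕ l) (l ⊕ l) R} (hA : A ∈ symplecticGroup l R)
    {v : l ⊕ l → R} (hv : A *ᵥ v = v) : Aᵀ *ᵥ (J l R *ᵥ v) = J l R *ᵥ v := by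
  conv_lhs => rw [← hv, mulVec_mulVec, mulVec_mulVec, mem_iff'.mp hA]

theorem fromBlocks_one_mem_iff {s : Matrix l l R} :
    fromBlocks 1 s 0 1 ∈ symplecticGroup l R ↔ sᵀ = s := by
  simp [fromBlocks_mem_iff, eq_comm]

theorem fromBlocks_zero_zero_mem_iff {A D : Matrix l l R} :
    fromBlocks A 0 0 D ∈ symplecticGroup l R ↔ Aᵀ * D = 1 := by
  simp [fromBlocks_mem_iff]

theorem fromBlocks_zero_zero_mul_fromBlocks_one {A D : Matrix l l R} (h : Aᵀ * D = 1)
    (s : Matrix l l R) :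
    fromBlocks A 0 0 D * fromBlocks 1 s 0 1 =
      fromBlocks 1 (A * s * Aᵀ) 0 1 * fromBlocks A 0 0 D := by
  simp [fromBlocks_multiply, Matrix.mul_assoc, h]

variable (l R) in
def ofGL : GL l R →* symplecticGroup l R where
  toFun A := ⟨fromBlocks A 0 0 (↑A⁻¹)ᵀ, fromBlocks_zero_zero_mem_iff.mpr <| by
    rw [← transpose_mul, A.inv_mul, transpose_one]⟩
  map_one' := Subtype.ext <| by simp
  map_mul' A B := Subtype.ext <| by simp [fromBlocks_multiply, transpose_mul]

end Blocks

section Restriction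

variable {R : Type*} [CommRing R] {m : ℕ}

abbrev sumSucc (m : ℕ) : Fin m ⊕ Fin m → Fin (m + 1) ⊕ Fin (m + 1) := Sum.map Fin.succ Fin.succ

theorem sumSucc_injective : Function.Injective (sumSucc m) :=
  Sum.map_injective.mpr ⟨Fin.succ_injective _, Fin.succ_injective _⟩

@[simp]
theorem sumSucc_ne_inl_zero (k : Fin m ⊕ Fin m) : sumSucc m k ≠ Sum.inl 0 := by
  rcases k with k | k <;> simp [Fin.succ_ne_zero]

@[simp]
theorem sumSucc_ne_inr_zero (k : Fin m ⊕ Fin m) : sumSucc m k ≠ Sum.inr 0 := by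
  rcases k with k | k <;> simp [Fin.succ_ne_zero]

theorem eq_inl_zero_or_eq_inr_zero_of_notMem_range {K : Fin (m + 1) ⊕ Fin (m + 1)}
    (hK : K ∉ Set.range (sumSucc m)) : K = Sum.inl 0 ∨ K = Sum.inr 0 := by
  rcases K with k | k <;> induction k using Fin.cases <;> simp_all

theorem J_submatrix_sumSucc :
    (J (Fin (m + 1)) R).submatrix (sumSucc m) (sumSucc m) = J (Fin m) R := by
  simp [J, fromBlocks_submatrix_sumMap, submatrix_neg, submatrix_one _ (Fin.succ_injective _)]

theorem J_sumSucc_apply_of_notMem_range {K : Fin (m + 1) ⊕ Fin (m + 1)}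
    (hK : K ∉ Set.range (sumSucc m)) (k : Fin m ⊕ Fin m) :
    J (Fin (m + 1)) R (sumSucc m k) K = 0 := by
  rcases eq_inl_zero_or_eq_inr_zero_of_notMem_range hK with rfl | rfl <;>
    rcases k with k | k <;> simp [J, one_apply, Fin.succ_ne_zero]

variable (R m) in
abbrev stabilizerInlZero : Subgroup (symplecticGroup (Fin (m + 1)) R) :=
  MulAction.stabilizer _ (Pi.single (Sum.inl 0) 1 : Fin (m + 1) ⊕ Fin (m + 1) → R)

variable {M N : symplecticGroup (Fin (m + 1)) R}

theorem apply_inl_zero_of_mem_stabilizer (hM : M ∈ stabilizerInlZero R m)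
    (K : Fin (m + 1) ⊕ Fin (m + 1)) :
    M.1 K (Sum.inl 0) = (Pi.single (Sum.inl 0) 1 : Fin (m + 1) ⊕ Fin (m + 1) → R) K := by
  have h : M.1 *ᵥ Pi.single (Sum.inl 0) 1 = Pi.single (Sum.inl 0) 1 := hM
  rw [mulVec_single_one] at h
  exact congrFun h K

theorem inr_zero_apply_of_mem_stabilizer (hM : M ∈ stabilizerInlZero R m)
    (K : Fin (m + 1) ⊕ Fin (m + 1)) :
    M.1 (Sum.inr 0) K = (Pi.single (Sum.inr 0) 1 : Fin (m + 1) ⊕ Fin (m + 1) → R) K := by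
  have h := transpose_mulVec_J_mulVec M.2 hM
  rw [mulVec_single_one, J_col_inl, mulVec_single_one] at h
  exact congrFun h K

theorem submatrix_sumSucc_mem (hM : M ∈ stabilizerInlZero R m) :
    M.1.submatrix (sumSucc m) (sumSucc m) ∈ symplecticGroup (Fin m) R := by
  rw [mem_iff, ← J_submatrix_sumSucc, transpose_submatrix, Matrix.mul_assoc,
    ← submatrix_mul_of_injective _ _ _ sumSucc_injective _
      fun i j K hK => by rw [J_sumSucc_apply_of_notMem_range hK, zero_mul],
    ← submatrix_mul_of_injective _ _ _ sumSucc_injective _, ← Matrix.mul_assoc, mem_iff.mp M.2]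
  intro i j K hK
  rcases eq_inl_zero_or_eq_inr_zero_of_notMem_range hK with rfl | rfl
  · simp [apply_inl_zero_of_mem_stabilizer hM, Pi.single_eq_of_ne]
  · simp [J_mul_apply_inr, apply_inl_zero_of_mem_stabilizer hM, Pi.single_eq_of_ne]

theorem submatrix_sumSucc_mul (hM : M ∈ stabilizerInlZero R m) (hN : N ∈ stabilizerInlZero R m) :
    (M * N).1.submatrix (sumSucc m) (sumSucc m) =
      M.1.submatrix (sumSucc m) (sumSucc m) * N.1.submatrix (sumSucc m) (sumSucc m) := by
  refine submatrix_mul_of_injective _ _ _ sumSucc_injective _ fun i j K hK => ?_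
  rcases eq_inl_zero_or_eq_inr_zero_of_notMem_range hK with rfl | rfl
  · simp [apply_inl_zero_of_mem_stabilizer hM, Pi.single_eq_of_ne]
  · simp [inr_zero_apply_of_mem_stabilizer hN, Pi.single_eq_of_ne]

variable (R m) in
def restrictStabilizer : stabilizerInlZero R m →* symplecticGroup (Fin m) R where
  toFun M := ⟨_, submatrix_sumSucc_mem M.2⟩
  map_one' := Subtype.ext (submatrix_one _ sumSucc_injective)
  map_mul' M N := Subtype.ext (submatrix_sumSucc_mul M.2 N.2)

theorem apply_eq_one_apply_of_restrictStabilizer_eq_one (hM : M ∈ stabilizerInlZero R m)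
    (h : restrictStabilizer R m ⟨M, hM⟩ = 1) {K L : Fin (m + 1) ⊕ Fin (m + 1)}
    (hK : K ≠ Sum.inl 0) (hL : L ≠ Sum.inr 0) : M.1 K L = (1 : Matrix _ _ R) K L := by
  by_cases hLr : L ∈ Set.range (sumSucc m)
  · by_cases hKr : K ∈ Set.range (sumSucc m)
    · obtain ⟨k, rfl⟩ := hKr
      obtain ⟨l, rfl⟩ := hLr
      have h1 := congrFun (congrFun (submatrix_one (α := R) _ (sumSucc_injective (m := m))) k) l
      exact (congrFun (congrFun (congrArg Subtype.val h) k) l).trans h1.symm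
    · obtain rfl := (eq_inl_zero_or_eq_inr_zero_of_notMem_range hKr).resolve_left hK
      rw [inr_zero_apply_of_mem_stabilizer hM, one_apply_ne hL.symm, Pi.single_eq_of_ne hL]
  · obtain rfl := (eq_inl_zero_or_eq_inr_zero_of_notMem_range hLr).resolve_right hL
    rw [apply_inl_zero_of_mem_stabilizer hM, one_apply_ne hK, Pi.single_eq_of_ne hK]

end Restriction

end SymplecticGroup

open SymplecticGroup

abbrev SymUnitri (n : ℕ) := Multiplicative (SymM n) ⋊[unitriAction n] Unitri n

theorem isPGroup_unitri (n : ℕ) : IsPGroup 2 (Unitri n) := by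
  intro x
  refine ⟨n, Subtype.ext (Units.ext ?_)⟩
  -- `Matrix.charP` needs a nonempty index type
  rcases isEmpty_or_nonempty (Fin n) with _ | _
  · exact Subsingleton.elim _ _
  set A : Matrix (Fin n) (Fin n) (ZMod 2) := x.1.1
  have hN : (A - 1) ^ n = 0 := by
    simpa using pow_card_eq_zero_of_isUpperTriangular
      ((show A.IsUpperTriangular from x.2.2).sub blockTriangular_one)
      (fun i => by simp [A, x.2.1 i])
  simpa using pow_prime_pow_eq_one_of_sub_one_pow_eq_zero hN

def symShear (n : ℕ) : Multiplicative (SymM n) →* symplecticGroup (Fin n) (ZMod 2) where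
  toFun s := ⟨fromBlocks 1 s.toAdd 0 1, fromBlocks_one_mem_iff.mpr s.toAdd.2⟩
  map_one' := Subtype.ext fromBlocks_one
  map_mul' s t := Subtype.ext <| by simp [fromBlocks_multiply, add_comm]

def toSymplectic (n : ℕ) : SymUnitri n →* symplecticGroup (Fin n) (ZMod 2) :=
  SemidirectProduct.lift (symShear n) ((ofGL (Fin n) (ZMod 2)).comp (Unitri n).subtype)
    fun x => MonoidHom.ext fun s => by
      simp only [MonoidHom.comp_apply, MulEquiv.coe_toMonoidHom, MulAut.conj_apply,
        eq_mul_inv_iff_mul_eq]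
      refine Subtype.ext (fromBlocks_zero_zero_mul_fromBlocks_one ?_ _).symm
      rw [← transpose_mul, Units.inv_mul, transpose_one]

theorem coe_toSymplectic {n : ℕ} (g : SymUnitri n) :
    (toSymplectic n g).1 =
      fromBlocks g.right.1.1 (g.left.toAdd.1 * (g.right.1⁻¹).1ᵀ) 0 (g.right.1⁻¹).1ᵀ := by
  simp [toSymplectic, symShear, ofGL, SemidirectProduct.lift, fromBlocks_multiply]

theorem toSymplectic_injective (n : ℕ) : Function.Injective (toSymplectic n) := by
  refine (injective_iff_map_eq_one _).mpr fun g hg => ?_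
  obtain ⟨hx, hs, -⟩ : g.right = 1 ∧ g.left.toAdd.1 * _ = 0 ∧ _ := by
    simpa [coe_toSymplectic, ← fromBlocks_one, fromBlocks_inj] using congrArg Subtype.val hg
  simp only [hx, OneMemClass.coe_one, Units.val_one, inv_one, transpose_one,
    Matrix.mul_one] at hs
  exact SemidirectProduct.ext (Subtype.ext hs) hx

theorem isPGroup_range_toSymplectic (n : ℕ) : IsPGroup 2 (toSymplectic n).range :=
  (ZModModule.isPGroup_multiplicative.semidirectProduct (isPGroup_unitri n)).of_surjective _
    (MonoidHom.rangeRestrict_surjective _)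

theorem mem_range_toSymplectic_of_toBlocks {n : ℕ} {M : symplecticGroup (Fin n) (ZMod 2)}
    (h₂₁ : M.1.toBlocks₂₁ = 0) (hdiag : ∀ i, M.1.toBlocks₁₁ i i = 1)
    (hlow : ∀ i j, j < i → M.1.toBlocks₁₁ i j = 0) : M ∈ (toSymplectic n).range := by
  set A := M.1.toBlocks₁₁
  set B := M.1.toBlocks₁₂
  set D := M.1.toBlocks₂₂
  have hM : M.1 = fromBlocks A B 0 D := by rw [← h₂₁, fromBlocks_toBlocks]
  obtain ⟨-, hBD, hAD⟩ := fromBlocks_mem_iff.mp (hM ▸ M.2)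
  rw [transpose_zero, Matrix.zero_mul, sub_zero] at hAD
  have hDA : D * Aᵀ = 1 := mul_eq_one_comm.mp hAD
  have hADt : A * Dᵀ = 1 := by simpa using congrArg transpose hDA
  have hsymm : (B * Aᵀ)ᵀ = B * Aᵀ := calc
    (B * Aᵀ)ᵀ = A * Bᵀ * (D * Aᵀ) := by
      rw [hDA, Matrix.mul_one, transpose_mul, transpose_transpose]
    _ = A * Dᵀ * B * Aᵀ := by
      rw [← Matrix.mul_assoc, Matrix.mul_assoc A, hBD]; simp only [Matrix.mul_assoc]
    _ = B * Aᵀ := by rw [hADt, Matrix.one_mul]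
  let x : Unitri n := ⟨⟨A, Dᵀ, hADt, mul_eq_one_comm.mp hADt⟩, hdiag, hlow⟩
  refine ⟨⟨Multiplicative.ofAdd ⟨B * Aᵀ, hsymm⟩, x⟩, Subtype.ext ?_⟩
  rw [coe_toSymplectic, hM]
  simp [x, Matrix.mul_assoc, hAD]

theorem exists_unitri_eq_transvection {m : ℕ} {j : Fin (m + 1)} (hj : j ≠ 0) :
    ∃ x : Unitri (m + 1), x.1.1 = transvection 0 j 1 := by
  have hsq : transvection 0 j (1 : ZMod 2) * transvection 0 j 1 = 1 := by
    rw [transvection_mul_transvection_same _ _ hj.symm, show (1 + 1 : ZMod 2) = 0 from rfl,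
      transvection_zero]
  refine ⟨⟨⟨_, _, hsq, hsq⟩, fun i => ?_, fun i k hki => ?_⟩, rfl⟩
  · simp only [transvection, Matrix.add_apply, one_apply_eq, single_apply, add_eq_left,
      ite_eq_right_iff]
    rintro ⟨rfl, rfl⟩
    exact absurd rfl hj
  · simp only [transvection, Matrix.add_apply, one_apply_ne hki.ne', single_apply, zero_add,
      ite_eq_right_iff]
    rintro ⟨rfl, -⟩
    exact absurd hki (Fin.not_lt_zero k)

theorem eq_single_inl_zero_of_forall_mulVec_eq {m : ℕ} {v : Fin (m + 1) ⊕ Fin (m + 1) → ZMod 2}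
    (hv : v ≠ 0) (hfix : ∀ g, (toSymplectic (m + 1) g).1 *ᵥ v = v) :
    v = Pi.single (Sum.inl 0) 1 := by
  have hinr (i : Fin (m + 1)) : v (Sum.inr i) = 0 := by
    have h := congrFun (hfix (SemidirectProduct.inl (Multiplicative.ofAdd
      ⟨single i i 1, transpose_single i i 1⟩))) (Sum.inl i)
    simpa [coe_toSymplectic, fromBlocks_mulVec, single_mulVec] using h
  have hinl (j : Fin (m + 1)) (hj : j ≠ 0) : v (Sum.inl j) = 0 := by
    obtain ⟨x, hx⟩ := exists_unitri_eq_transvection hj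
    have h := congrFun (hfix (SemidirectProduct.inr x)) (Sum.inl 0)
    simpa [coe_toSymplectic, fromBlocks_mulVec, hx, transvection, add_mulVec, single_mulVec]
      using h
  have hv_eq : v = Pi.single (Sum.inl 0) (v (Sum.inl 0)) := by
    ext (j | j)
    · rcases eq_or_ne j 0 with rfl | hj
      · simp
      · simp [hinl j hj, hj]
    · simp [hinr j]
  have h0 : v (Sum.inl 0) ≠ 0 := fun h0 => hv (by rw [hv_eq, h0, Pi.single_zero])
  rwa [(by decide : ∀ a : ZMod 2, a ≠ 0 → a = 1) _ h0] at hv_eq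

def SymUnitri.extend {m : ℕ} (g : SymUnitri m) : SymUnitri (m + 1) :=
  ⟨Multiplicative.ofAdd ⟨extendSucc g.left.toAdd.1, by
      rw [mem_SymM_iff, transpose_extendSucc, g.left.toAdd.2]⟩,
    ⟨Units.map (extendSuccHom _ _) g.right.1, fun i => by
      induction i using Fin.cases
      · rfl
      · exact g.right.2.1 _, fun i j hij => by
      induction i using Fin.cases with
      | zero => exact absurd hij (Fin.not_lt_zero j)
      | succ i =>
        induction j using Fin.cases
        · rfl
        · exact g.right.2.2 _ _ (Fin.succ_lt_succ_iff.mp hij)⟩⟩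

theorem submatrix_toSymplectic_extend {m : ℕ} (g : SymUnitri m) :
    (toSymplectic (m + 1) g.extend).1.submatrix (sumSucc m) (sumSucc m) = (toSymplectic m g).1 := by
  rw [coe_toSymplectic, coe_toSymplectic, fromBlocks_submatrix_sumMap]
  simp only [SymUnitri.extend, Units.coe_map_inv, Units.coe_map, extendSuccHom, MonoidHom.coe_mk,
    OneHom.coe_mk, toAdd_ofAdd, transpose_extendSucc, ← extendSucc_mul]
  rfl

theorem mem_range_toSymplectic_of_restrictStabilizer_eq_one {m : ℕ}
    {M : symplecticGroup (Fin (m + 1)) (ZMod 2)} (hM : M ∈ stabilizerInlZero (ZMod 2) m)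
    (h : restrictStabilizer (ZMod 2) m ⟨M, hM⟩ = 1) : M ∈ (toSymplectic (m + 1)).range := by
  have hone (K L) (hK : K ≠ Sum.inl 0) (hL : L ≠ Sum.inr 0) :=
    apply_eq_one_apply_of_restrictStabilizer_eq_one hM h hK hL
  refine mem_range_toSymplectic_of_toBlocks (ext fun i j => ?_) (fun i => ?_) fun i j hji => ?_
  · simpa [toBlocks₂₁] using hone (Sum.inr i) (Sum.inl j) (by simp) (by simp)
  · rcases eq_or_ne i 0 with rfl | hi
    · simpa [toBlocks₁₁] using apply_inl_zero_of_mem_stabilizer hM (Sum.inl 0)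
    · simpa [toBlocks₁₁] using hone (Sum.inl i) (Sum.inl i) (by simpa using hi) (by simp)
  · simpa [toBlocks₁₁, hji.ne'] using
      hone (Sum.inl i) (Sum.inl j) (by simpa using ((Fin.zero_le j).trans_lt hji).ne') (by simp)

theorem le_stabilizerInlZero_of_isPGroup {m : ℕ}
    {Q : Subgroup (symplecticGroup (Fin (m + 1)) (ZMod 2))} (hQ : IsPGroup 2 Q)
    (hPQ : (toSymplectic (m + 1)).range ≤ Q) : Q ≤ stabilizerInlZero (ZMod 2) m := by
  obtain ⟨v, hv, hv0⟩ := hQ.exists_fixed_point_of_prime_dvd_card_of_fixed_point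
    (Fin (m + 1) ⊕ Fin (m + 1) → ZMod 2) (by simp [Nat.card_eq_fintype_card])
    (a := 0) fun g => smul_zero g
  obtain rfl := eq_single_inl_zero_of_forall_mulVec_eq hv0.symm fun g => hv ⟨_, hPQ ⟨g, rfl⟩⟩
  exact fun M hM => hv ⟨M, hM⟩

theorem le_range_toSymplectic_of_isPGroup {n : ℕ}
    {Q : Subgroup (symplecticGroup (Fin n) (ZMod 2))} (hQ : IsPGroup 2 Q)
    (hPQ : (toSymplectic n).range ≤ Q) : Q ≤ (toSymplectic n).range := by
  induction n with
  | zero =>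
    intro M _
    rw [Subsingleton.elim M 1]
    exact one_mem _
  | succ m ih =>
    have hstab := le_stabilizerInlZero_of_isPGroup hQ hPQ
    have hlift (g : SymUnitri m) : toSymplectic (m + 1) g.extend ∈ Q := hPQ ⟨g.extend, rfl⟩
    have hres (g : SymUnitri m) :
        restrictStabilizer (ZMod 2) m ⟨_, hstab (hlift g)⟩ = toSymplectic m g :=
      Subtype.ext (submatrix_toSymplectic_extend g)
    set Q' := (Q.subgroupOf (stabilizerInlZero (ZMod 2) m)).map (restrictStabilizer (ZMod 2) m)
    have hPQ' : (toSymplectic m).range ≤ Q' := by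
      rintro _ ⟨g, rfl⟩
      exact ⟨_, hlift g, hres g⟩
    intro M hM
    obtain ⟨g, hg⟩ := ih (hQ.comap_subtype.map _) hPQ' ⟨⟨M, hstab hM⟩, hM, rfl⟩
    have hM' : M * (toSymplectic (m + 1) g.extend)⁻¹ ∈ (toSymplectic (m + 1)).range := by
      refine mem_range_toSymplectic_of_restrictStabilizer_eq_one
        (hstab (mul_mem hM (inv_mem (hlift g)))) ?_
      have := map_mul (restrictStabilizer (ZMod 2) m) ⟨M, hstab hM⟩ ⟨_, hstab (hlift g)⟩⁻¹
      rwa [map_inv, hres, ← hg, mul_inv_cancel] at this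
    simpa using mul_mem hM' ⟨g.extend, rfl⟩

theorem semidirectProduct_iso_sylow_two_symplectic_general (n : ℕ) :
    ∃ R : Sylow 2 (Matrix.symplecticGroup (Fin n) (ZMod 2)),
      Nonempty ((Multiplicative (SymM n) ⋊[unitriAction n] Unitri n) ≃* R) := by
  obtain ⟨R, hPR⟩ := (isPGroup_range_toSymplectic n).exists_le_sylow
  have hRP := le_range_toSymplectic_of_isPGroup R.isPGroup' hPR
  exact ⟨R, ⟨(MonoidHom.ofInjective (toSymplectic_injective n)).trans
    (MulEquiv.subgroupCongr (le_antisymm hPR hRP))⟩⟩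

/-- The semidirect product `SymM_n(2) ⋊ U_n(2)` (with `U_n(2)` acting by `x • s = x s xᵀ`)
is isomorphic to a Sylow `2`-subgroup of `Sp_{2n}(𝔽₂)`. -/
theorem semidirectProduct_iso_sylow_two_symplectic (n : ℕ) (hn : 1 ≤ n) :
    ∃ R : Sylow 2 (Matrix.symplecticGroup (Fin n) (ZMod 2)),
      Nonempty ((Multiplicative (SymM n) ⋊[unitriAction n] Unitri n) ≃* R) :=
  semidirectProduct_iso_sylow_two_symplectic_general n
end

section
/- Let n ≥ 2. Let SymM_n(2) be the additive group of symmetric n×n matrices over F_2 and let M be the additive subgroup of SymM_n(2) generated by all elements of the form x * s * xᵀ − s, where s ranges over SymM_n(2) and x ranges over the group U_n(2) of upper unitriangular n×n matrices over F_2. Then the quotient group SymM_n(2)/M is isomorphic to (ZMod 2)². -/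
open Matrix

/-- The additive subgroup `[SymM_n(2), U_n(2)]` of `SymM_n(2)` generated by the elements
`x * s * xᵀ - s` for `s` symmetric and `x` upper unitriangular. -/
def symCommSub (n : ℕ) : AddSubgroup (SymM n) :=
  AddSubgroup.closure {z : SymM n | ∃ (x : Unitri n) (s : SymM n),
    (z : Matrix (Fin n) (Fin n) (ZMod 2)) =
      ((x : GL (Fin n) (ZMod 2)) : Matrix (Fin n) (Fin n) (ZMod 2)) *
      (s : Matrix (Fin n) (Fin n) (ZMod 2)) *
      ((x : GL (Fin n) (ZMod 2)) : Matrix (Fin n) (Fin n) (ZMod 2))ᵀ -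
      (s : Matrix (Fin n) (Fin n) (ZMod 2))}


/-!
Let `p < q` be the last two indices and `φ σ = (σ p p + σ p q, σ q q)`. Rows `p` and `q` of an
upper unitriangular `x` are `e_p + t e_q` and `e_q`, so over `𝔽₂` the entries of `x σ xᵀ` at
`(p, p)`, `(p, q)`, `(q, q)` are `σ p p + t² σ q q`, `σ p q + t σ q q`, `σ q q`; as `t² = t`, `φ`
kills every `x σ xᵀ - σ`. Conversely the transvections `1 + E i j` (`i < j`) show that `M`
contains `E i i + E i j + E j i` and `E i m + E m i` for `m ≠ j`: these give every basis element
of `SymM_n(2)` except `E p p` and `E q q`, together with `E p p + E p q + E q p`, so `M = ker φ`.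
Since `φ` is onto, the quotient is `(ZMod 2)²`.
-/

structure IsLastTwo {n : ℕ} (p q : Fin n) : Prop where
  lt : p < q
  lt_snd : ∀ c, c ≠ q → c < q
  lt_fst : ∀ c, c ≠ p → c ≠ q → c < p

lemma isLastTwo_sub_two_sub_one {n : ℕ} (hn : 2 ≤ n) :
    IsLastTwo (⟨n - 2, by omega⟩ : Fin n) ⟨n - 1, by omega⟩ where
  lt := Fin.mk_lt_mk.2 (by omega)
  lt_snd c hc := by
    simp only [Ne, Fin.ext_iff, Fin.lt_def] at hc ⊢
    omega
  lt_fst c hcp hcq := by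
    simp only [Ne, Fin.ext_iff, Fin.lt_def] at hcp hcq ⊢
    omega

section Unitriangular

variable {n : ℕ} {p q : Fin n} {R : Type*} [Semiring R] {X : Matrix (Fin n) (Fin n) R}

lemma IsLastTwo.row_snd_of_unitriangular (h : IsLastTwo p q) (hdiag : ∀ i, X i i = 1)
    (hlow : ∀ i j, j < i → X i j = 0) : X q = Pi.single q 1 := by
  funext c
  rcases eq_or_ne c q with rfl | hc
  · simp [hdiag]
  · simp [hlow q c (h.lt_snd c hc), hc]

lemma IsLastTwo.row_fst_of_unitriangular (h : IsLastTwo p q) (hdiag : ∀ i, X i i = 1)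
    (hlow : ∀ i j, j < i → X i j = 0) : X p = Pi.single p 1 + X p q • Pi.single q 1 := by
  funext c
  rcases eq_or_ne c p with rfl | hcp
  · simp [hdiag, h.lt.ne]
  rcases eq_or_ne c q with rfl | hcq
  · simp [h.lt.ne']
  · simp [hlow p c (h.lt_fst c hcp hcq), hcp, hcq]

end Unitriangular

lemma Matrix.mul_mul_transpose_corner {ι : Type*} [Fintype ι] [DecidableEq ι]
    {X s : Matrix ι ι (ZMod 2)} {p q : ι} (hs : sᵀ = s) (hXq : X q = Pi.single q 1)
    (hXp : X p = Pi.single p 1 + X p q • Pi.single q 1) :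
    (X * s * Xᵀ) p p + (X * s * Xᵀ) p q = s p p + s p q ∧ (X * s * Xᵀ) q q = s q q := by
  have hsym : s q p = s p q := congrFun (congrFun hs p) q
  generalize X p q = t at hXp
  simp only [mul_mul_apply, transpose_transpose, hXq, hXp, mulVec_add, mulVec_smul,
    mulVec_single_one, add_dotProduct, dotProduct_add, smul_dotProduct, dotProduct_smul,
    single_one_dotProduct, col_apply, smul_eq_mul, hsym]
  refine ⟨?_, trivial⟩
  -- over `𝔽₂` the cross terms `t b` cancel and `t + t² = 0`
  have key : ∀ t a b c : ZMod 2, a + t * b + t * (b + t * c) + (b + t * c) = a + b := by decide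
  exact key _ _ _ _

def Unitri.transvection {n : ℕ} {i j : Fin n} (h : i < j) : Unitri n :=
  have hsq : Matrix.transvection i j (1 : ZMod 2) * Matrix.transvection i j 1 = 1 := by
    rw [transvection_mul_transvection_same _ _ h.ne, CharTwo.add_self_eq_zero, transvection_zero]
  ⟨⟨Matrix.transvection i j 1, Matrix.transvection i j 1, hsq, hsq⟩,
   fun k ↦ by
    show Matrix.transvection i j (1 : ZMod 2) k k = 1
    rw [Matrix.transvection, Matrix.add_apply, one_apply_eq, single_apply_of_ne, add_zero]
    rintro ⟨rfl, rfl⟩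
    exact lt_irrefl _ h,
   fun k l hlk ↦ by
    show Matrix.transvection i j (1 : ZMod 2) k l = 0
    rw [Matrix.transvection, Matrix.add_apply, one_apply_ne hlk.ne', single_apply_of_ne, add_zero]
    rintro ⟨rfl, rfl⟩
    exact lt_asymm h hlk⟩

namespace SymM

variable {n : ℕ}

lemma neg_eq_self (σ : SymM n) : -σ = σ := by
  ext i j
  exact CharTwo.neg_eq _

def diagSingle (i : Fin n) : SymM n :=
  ⟨single i i 1, by rw [mem_SymM_iff, transpose_single]⟩

def offDiagSingle (i j : Fin n) : SymM n :=
  ⟨single i j 1 + single j i 1, by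
    rw [mem_SymM_iff, transpose_add, transpose_single, transpose_single, add_comm]⟩

lemma offDiagSingle_comm (i j : Fin n) : offDiagSingle i j = offDiagSingle j i :=
  Subtype.ext (add_comm _ _)

def symmetrize : Matrix (Fin n) (Fin n) (ZMod 2) →+ SymM n where
  toFun A := ⟨A + Aᵀ - diagonal (diag A), by
    rw [mem_SymM_iff, transpose_sub, transpose_add, transpose_transpose, diagonal_transpose,
      add_comm]⟩
  map_zero' := by ext; simp
  map_add' A B := by
    ext : 1
    simp only [AddSubgroup.coe_add, transpose_add, diag_add]
    rw [show diagonal (A.diag + B.diag) = diagonal A.diag + diagonal B.diag from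
      (diagonal_add _ _).symm]
    abel

lemma symmetrize_single_self (i : Fin n) : symmetrize (single i i 1) = diagSingle i := by
  ext : 1
  simp [symmetrize, diagSingle, transpose_single, diag_single_same, diagonal_single]

lemma symmetrize_single_of_ne {i j : Fin n} (h : i ≠ j) :
    symmetrize (single i j 1) = offDiagSingle i j := by
  ext : 1
  simp [symmetrize, offDiagSingle, transpose_single, diag_single_of_ne _ _ _ h]

lemma symmetrize_surjective : Function.Surjective (symmetrize (n := n)) := by
  intro σ
  refine ⟨of fun i j => if i ≤ j then (σ : Matrix (Fin n) (Fin n) (ZMod 2)) i j else 0, ?_⟩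
  ext i j : 2
  have hσ := congrFun (congrFun σ.2 i) j
  rcases lt_trichotomy i j with h | rfl | h
  · simp [symmetrize, h.le, not_le.2 h, h.ne]
  · simp [symmetrize]
  · simp [symmetrize, h.le, not_le.2 h, h.ne', ← hσ]

lemma addMonoidHom_ext {G : Type*} [AddCommMonoid G] {f g : SymM n →+ G}
    (hdiag : ∀ i, f (diagSingle i) = g (diagSingle i))
    (hoffDiag : ∀ i j, i < j → f (offDiagSingle i j) = g (offDiagSingle i j)) : f = g := by
  suffices f.comp symmetrize = g.comp symmetrize from
    AddMonoidHom.ext fun σ ↦ by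
      obtain ⟨A, rfl⟩ := symmetrize_surjective σ
      exact DFunLike.congr_fun this A
  apply Matrix.ext_addMonoidHom
  intro i j
  ext x
  simp only [AddMonoidHom.coe_comp, Function.comp_apply, singleAddMonoidHom_apply]
  obtain rfl | rfl : x = 0 ∨ x = 1 := by revert x; decide
  · simp only [single_zero, map_zero]
  · rcases lt_trichotomy i j with h | rfl | h
    · rw [symmetrize_single_of_ne h.ne, hoffDiag i j h]
    · rw [symmetrize_single_self, hdiag i]
    · rw [symmetrize_single_of_ne h.ne', offDiagSingle_comm, hoffDiag j i h]

lemma diagSingle_add_offDiagSingle_mem {i j : Fin n} (h : i < j) :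
    diagSingle i + offDiagSingle i j ∈ symCommSub n := by
  refine AddSubgroup.subset_closure ⟨Unitri.transvection h, diagSingle j, ?_⟩
  simp [diagSingle, offDiagSingle, Unitri.transvection, Matrix.transvection, Matrix.mul_add,
    Matrix.add_mul, transpose_single]
  abel

lemma offDiagSingle_mem_of_lt {i j m : Fin n} (h : i < j) (hm : m ≠ j) :
    offDiagSingle i m ∈ symCommSub n := by
  refine AddSubgroup.subset_closure ⟨Unitri.transvection h, offDiagSingle j m, ?_⟩
  simp [offDiagSingle, Unitri.transvection, Matrix.transvection, Matrix.mul_add, Matrix.add_mul,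
    transpose_single, single_mul_single_of_ne, hm, hm.symm]
  abel

variable {p q : Fin n}

lemma diagSingle_mem (h : IsLastTwo p q) {i : Fin n} (hi : i < p) :
    diagSingle i ∈ symCommSub n := by
  simpa using sub_mem (diagSingle_add_offDiagSingle_mem (hi.trans h.lt))
    (offDiagSingle_mem_of_lt hi h.lt.ne')

lemma offDiagSingle_mem (h : IsLastTwo p q) {i j : Fin n} (hij : i < j)
    (hne : i ≠ p ∨ j ≠ q) : offDiagSingle i j ∈ symCommSub n := by
  rcases eq_or_ne j q with rfl | hjq
  · exact offDiagSingle_mem_of_lt (h.lt_fst i (hne.resolve_right (not_not.2 rfl)) hij.ne)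
      h.lt.ne'
  · exact offDiagSingle_mem_of_lt (hij.trans (h.lt_snd j hjq)) hjq

def cornerInvariant (p q : Fin n) : SymM n →+ ZMod 2 × ZMod 2 where
  toFun σ := (σ.1 p p + σ.1 p q, σ.1 q q)
  map_zero' := by simp
  map_add' σ τ := by ext <;> simp [add_add_add_comm]

@[simp] lemma cornerInvariant_apply (σ : SymM n) :
    cornerInvariant p q σ = (σ.1 p p + σ.1 p q, σ.1 q q) := rfl

def cornerSection (p q : Fin n) : ZMod 2 × ZMod 2 →+ SymM n where
  toFun v := ⟨single p p v.1 + single q q v.2, by simp [transpose_single]⟩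
  map_zero' := by ext : 1; simp
  map_add' v w := by ext : 1; simp [single_add, add_add_add_comm]

lemma cornerInvariant_cornerSection (hpq : p ≠ q) :
    Function.RightInverse (cornerSection p q) (cornerInvariant p q) := fun v ↦ by
  simp [cornerSection, hpq, hpq.symm]

lemma symCommSub_le_ker (h : IsLastTwo p q) : symCommSub n ≤ (cornerInvariant p q).ker := by
  rw [symCommSub, AddSubgroup.closure_le]
  rintro σ ⟨⟨x, hdiag, hlow⟩, s, hσ⟩
  obtain ⟨hfst, hsnd⟩ := mul_mul_transpose_corner s.2 (h.row_snd_of_unitriangular hdiag hlow)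
    (h.row_fst_of_unitriangular hdiag hlow)
  change cornerInvariant p q σ = 0
  simp only [cornerInvariant_apply, hσ, Matrix.sub_apply, sub_add_sub_comm, hfst, hsnd, sub_self,
    Prod.mk_zero_zero]

lemma mk_cornerSection_cornerInvariant_diagSingle (h : IsLastTwo p q) (i : Fin n) :
    (cornerSection p q (cornerInvariant p q (diagSingle i)) : SymM n ⧸ symCommSub n) =
      diagSingle i := by
  by_cases hi : i = p ∨ i = q
  · congr 1
    ext : 1
    rcases hi with rfl | rfl <;> simp [cornerSection, diagSingle, h.lt.ne, h.lt.ne']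
  · push Not at hi
    have hφ : cornerInvariant p q (diagSingle i) = 0 := by simp [diagSingle, hi.1, hi.2]
    rw [hφ, map_zero, QuotientAddGroup.mk_zero, eq_comm, QuotientAddGroup.eq_zero_iff]
    exact diagSingle_mem h (h.lt_fst i hi.1 hi.2)

lemma mk_cornerSection_cornerInvariant_offDiagSingle (h : IsLastTwo p q) {i j : Fin n}
    (hij : i < j) :
    (cornerSection p q (cornerInvariant p q (offDiagSingle i j)) : SymM n ⧸ symCommSub n) =
      offDiagSingle i j := by
  by_cases hpq : i = p ∧ j = q
  · obtain ⟨rfl, rfl⟩ := hpq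
    have hψφ : cornerSection i j (cornerInvariant i j (offDiagSingle i j)) = diagSingle i := by
      ext : 1
      simp [cornerSection, offDiagSingle, diagSingle, h.lt.ne, h.lt.ne']
    rw [hψφ, QuotientAddGroup.eq_iff_sub_mem, sub_eq_add_neg, neg_eq_self]
    exact diagSingle_add_offDiagSingle_mem hij
  · have hφ : cornerInvariant p q (offDiagSingle i j) = 0 := by
      have := h.lt
      simp [offDiagSingle, single_apply]
      grind
    rw [hφ, map_zero, QuotientAddGroup.mk_zero, eq_comm, QuotientAddGroup.eq_zero_iff]
    exact offDiagSingle_mem h hij (not_and_or.1 hpq)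

lemma symCommSub_eq_ker (h : IsLastTwo p q) : symCommSub n = (cornerInvariant p q).ker := by
  refine le_antisymm (symCommSub_le_ker h) fun σ hσ ↦ ?_
  have hfactor : ((QuotientAddGroup.mk' _).comp (cornerSection p q)).comp
      (cornerInvariant p q) = QuotientAddGroup.mk' (symCommSub n) :=
    addMonoidHom_ext (mk_cornerSection_cornerInvariant_diagSingle h)
      (fun _ _ ↦ mk_cornerSection_cornerInvariant_offDiagSingle h)
  rw [← QuotientAddGroup.eq_zero_iff, ← QuotientAddGroup.mk'_apply, ← hfactor]
  simp [(AddMonoidHom.mem_ker).1 hσ]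

end SymM

/-- For `n ≥ 2`, the quotient of the group of symmetric `n × n` matrices over `𝔽₂` by the
subgroup generated by the elements `x s xᵀ - s` (for `x` upper unitriangular) is
isomorphic to `(ZMod 2)²`. -/
theorem symM_quotient_comm_iso (n : ℕ) (hn : 2 ≤ n) :
    Nonempty ((SymM n ⧸ symCommSub n) ≃+ (ZMod 2 × ZMod 2)) := by
  have h := isLastTwo_sub_two_sub_one hn
  exact ⟨(QuotientAddGroup.quotientAddEquivOfEq (SymM.symCommSub_eq_ker h)).trans
    (QuotientAddGroup.quotientKerEquivOfRightInverse _ _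
      (SymM.cornerInvariant_cornerSection h.lt.ne))⟩
end

section
/- Let H be a group acting on an abelian group N via a homomorphism φ : H →* Aut(N), and let G = N ⋊_φ H be the corresponding semidirect product. Let M be the subgroup of N generated by all elements of the form (φ(h) n) * n⁻¹ with h ∈ H and n ∈ N. Then the abelianization of G is isomorphic to the direct product (N ⧸ M) × (abelianization of H). -/
/-!
In the abelianization of `N ⋊[φ] H` the conjugate `inl (φ h n) = inr h * inl n * inr h⁻¹`
becomes equal to `inl n`, so `inl` factors through the coinvariants `N ⧸ M`, and `inr` through
`Abelianization H`. Conversely, `φ` acts trivially on `N ⧸ M`, so `(n, h) ↦ ([n], [h])` is a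
homomorphism from the semidirect product to the abelian group `(N ⧸ M) × Abelianization H`.
The two induced maps are inverse to each other on generators.
-/

namespace SemidirectProduct

variable {N H : Type*} [Group H]

theorem of_inl_aut [Group N] {φ : H →* MulAut N} (h : H) (n : N) :
    Abelianization.of (inl (φ h n) : N ⋊[φ] H) = Abelianization.of (inl n) := by
  rw [inl_aut, map_mul, map_mul, mul_right_comm, ← map_mul, ← map_mul inr, mul_inv_cancel,
    map_one, map_one, one_mul]

variable [CommGroup N] (φ : H →* MulAut N)

def coinvariantsKer : Subgroup N :=
  Subgroup.closure {x | ∃ (h : H) (n : N), x = φ h n * n⁻¹}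

theorem mk_apply_eq_mk (h : H) (n : N) : ((φ h n : N) : N ⧸ coinvariantsKer φ) = n :=
  QuotientGroup.eq_iff_div_mem.2 (Subgroup.subset_closure ⟨h, n, div_eq_mul_inv _ _⟩)

theorem coinvariantsKer_le_ker_of_comp_inl :
    coinvariantsKer φ ≤ (Abelianization.of.comp (inl : N →* N ⋊[φ] H)).ker := by
  rw [coinvariantsKer, Subgroup.closure_le]
  rintro _ ⟨h, n, rfl⟩
  simp [of_inl_aut]

def toCoinvariantsProd : N ⋊[φ] H →* (N ⧸ coinvariantsKer φ) × Abelianization H :=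
  lift ((MonoidHom.inl _ _).comp (QuotientGroup.mk' _)) ((MonoidHom.inr _ _).comp Abelianization.of)
    fun h ↦ MonoidHom.ext fun n ↦ by simp [mk_apply_eq_mk]

def ofCoinvariantsProd :
    (N ⧸ coinvariantsKer φ) × Abelianization H →* Abelianization (N ⋊[φ] H) :=
  (QuotientGroup.lift _ _ (coinvariantsKer_le_ker_of_comp_inl φ)).coprod (Abelianization.map inr)

theorem ofCoinvariantsProd_comp_lift_toCoinvariantsProd :
    (ofCoinvariantsProd φ).comp (Abelianization.lift (toCoinvariantsProd φ)) = .id _ := by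
  apply Abelianization.hom_ext
  apply SemidirectProduct.hom_ext <;> ext <;> simp [toCoinvariantsProd, ofCoinvariantsProd]

theorem lift_toCoinvariantsProd_comp_ofCoinvariantsProd :
    (Abelianization.lift (toCoinvariantsProd φ)).comp (ofCoinvariantsProd φ) = .id _ := by
  refine (MonoidHom.coprod_unique _).symm.trans (Eq.trans ?_ (MonoidHom.coprod_unique _))
  congr 1 <;> ext <;> simp [toCoinvariantsProd, ofCoinvariantsProd]

def abelianizationMulEquiv :
    Abelianization (N ⋊[φ] H) ≃* (N ⧸ coinvariantsKer φ) × Abelianization H :=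
  MonoidHom.toMulEquiv _ _ (ofCoinvariantsProd_comp_lift_toCoinvariantsProd φ)
    (lift_toCoinvariantsProd_comp_ofCoinvariantsProd φ)

end SemidirectProduct

/-- Let `H` act on an abelian group `N` via `φ : H →* Aut N`, and let `G = N ⋊[φ] H`.
Let `M ≤ N` be generated by the elements `(φ h n) * n⁻¹`. Then the abelianization of `G`
is isomorphic to `(N ⧸ M) × Abelianization H`. -/
theorem abelianization_semidirectProduct (N H : Type*) [CommGroup N] [Group H]
    (φ : H →* MulAut N) :
    Nonempty (Abelianization (N ⋊[φ] H) ≃*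
      ((N ⧸ Subgroup.closure {x : N | ∃ (h : H) (n : N), x = φ h n * n⁻¹}) ×
        Abelianization H)) :=
  ⟨SemidirectProduct.abelianizationMulEquiv φ⟩
end

section
/- Let G be a finite perfect group, p a prime, and Z a subgroup of the center of G whose order is a power of p, with quotient map π : G → G/Z. Then precomposition with π induces a bijection between the isomorphism classes of irreducible finite-dimensional complex representations of G/Z of dimension not divisible by p and the isomorphism classes of irreducible finite-dimensional complex representations of G of dimension not divisible by p. -/
/-!
Pulling back along the surjection `G → G ⧸ Z` is fully faithful, so it reflects isomorphism
and, since for a finite group over `ℂ` simplicity means a one-dimensional endomorphism space,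
preserves and reflects simplicity. Conversely, by Schur's lemma a central `z ∈ Z` acts on an
irreducible `W` of dimension `d` by a scalar `c`. As `G` is perfect, `det ∘ ρ` is trivial, so
`c ^ d = 1`; and `c ^ (p ^ k) = 1` because `z` has `p`-power order. Since `p ∤ d`, `c = 1`, so
`W` factors through `G ⧸ Z`.
-/

open CategoryTheory

/-- The pullback (restriction) of a representation of `G ⧸ Z` to `G` along the quotient
map `π : G → G ⧸ Z`, i.e. precomposition with `π`. -/
noncomputable def pullbackRep {G : Type} [Group G] (Z : Subgroup G) [Z.Normal]
    (V : FDRep ℂ (G ⧸ Z)) : FDRep ℂ G :=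
  FDRep.of (V.ρ.comp (QuotientGroup.mk' Z))

theorem Representation.det_eq_one_of_commutator_eq_top {k G V : Type*} [Field k] [Group G]
    [AddCommGroup V] [Module k V] (ρ : Representation k G V) (hG : commutator G = ⊤) (g : G) :
    LinearMap.det (ρ g) = 1 := by
  have hδ : (Units.map LinearMap.det).comp ρ.toHomUnits g = 1 :=
    Abelianization.commutator_subset_ker _ (hG ▸ Subgroup.mem_top g)
  simpa using congrArg Units.val hδ

theorem eq_one_of_pow_eq_one_of_not_dvd {M : Type*} [Monoid M] {c : M} {p d k : ℕ}
    (hp : p.Prime) (hd : ¬ p ∣ d) (hcd : c ^ d = 1) (hck : c ^ p ^ k = 1) : c = 1 := by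
  have hcop : Nat.gcd d (p ^ k) = 1 :=
    (Nat.Coprime.pow_left k ((hp.coprime_iff_not_dvd).2 hd)).symm
  simpa [hcop] using pow_gcd_eq_one.2 ⟨hcd, hck⟩

namespace FDRep

variable {k G : Type} [Field k] [IsAlgClosed k] [Group G]

theorem exists_ρ_eq_algebraMap_of_mem_center (W : FDRep k G) [Simple W] {z : G}
    (hz : z ∈ Subgroup.center G) : ∃ c : k, W.ρ z = algebraMap k _ c := by
  let φ : W ⟶ W := ⟨FGModuleCat.ofHom (W.ρ z), fun g => by
    ext x
    change W.ρ z (W.ρ g x) = W.ρ g (W.ρ z x)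
    rw [← Module.End.mul_apply, ← map_mul, ← Subgroup.mem_center_iff.1 hz g, map_mul,
      Module.End.mul_apply]⟩
  obtain ⟨c, hc⟩ := endomorphism_simple_eq_smul_id k φ
  exact ⟨c, (congrArg (fun ψ : W ⟶ W => ψ.hom.hom.hom) hc).symm⟩

theorem ρ_eq_one_of_mem_center (hG : commutator G = ⊤) {p : ℕ} (hp : p.Prime)
    (W : FDRep k G) [Simple W] (hdim : ¬ p ∣ Module.finrank k W) {z : G}
    (hz : z ∈ Subgroup.center G) {n : ℕ} (hzn : z ^ p ^ n = 1) : W.ρ z = 1 := by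
  obtain ⟨c, hc⟩ := W.exists_ρ_eq_algebraMap_of_mem_center hz
  have : Nontrivial W.V :=
    Module.finrank_pos_iff.1 (Nat.pos_of_ne_zero fun h => hdim (h ▸ dvd_zero p))
  have hcd : c ^ Module.finrank k W = 1 := by
    simpa [hc, Algebra.algebraMap_eq_smul_one, LinearMap.det_smul] using
      Representation.det_eq_one_of_commutator_eq_top W.ρ hG z
  have hcp : c ^ p ^ n = 1 := by
    apply (algebraMap k (Module.End k W)).injective
    rw [map_pow, ← hc, ← map_pow, hzn, map_one, map_one]
  rw [hc, eq_one_of_pow_eq_one_of_not_dvd hp hdim hcd hcp, map_one]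

end FDRep

namespace pullbackRep

variable {G : Type} [Group G] (Z : Subgroup G) [Z.Normal]

noncomputable def homEquiv (V W : FDRep ℂ (G ⧸ Z)) :
    (pullbackRep Z V ⟶ pullbackRep Z W) ≃ₗ[ℂ] (V ⟶ W) where
  toFun f := ⟨f.hom, fun q => QuotientGroup.induction_on q f.comm⟩
  invFun f := ⟨f.hom, fun g => f.comm g⟩
  map_add' _ _ := rfl
  map_smul' _ _ := rfl
  left_inv _ := rfl
  right_inv _ := rfl

noncomputable def preimageIso {V W : FDRep ℂ (G ⧸ Z)} (e : pullbackRep Z V ≅ pullbackRep Z W) :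
    V ≅ W where
  hom := homEquiv Z V W e.hom
  inv := homEquiv Z W V e.inv
  hom_inv_id := Action.Hom.ext (congrArg Action.Hom.hom e.hom_inv_id :)
  inv_hom_id := Action.Hom.ext (congrArg Action.Hom.hom e.inv_hom_id :)

end pullbackRep

theorem simple_pullbackRep_iff {G : Type} [Group G] [Finite G] (Z : Subgroup G) [Z.Normal]
    (V : FDRep ℂ (G ⧸ Z)) : Simple (pullbackRep Z V) ↔ Simple V := by
  have : NeZero (Nat.card G : ℂ) := ⟨Nat.cast_ne_zero.2 Nat.card_pos.ne'⟩
  have : NeZero (Nat.card (G ⧸ Z) : ℂ) := ⟨Nat.cast_ne_zero.2 Nat.card_pos.ne'⟩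
  rw [FDRep.simple_iff_end_is_rank_one, FDRep.simple_iff_end_is_rank_one,
    (pullbackRep.homEquiv Z V V).finrank_eq]

namespace FDRep

variable {G : Type} [Group G] {Z : Subgroup G} [Z.Normal]

noncomputable def descend (W : FDRep ℂ G) (hW : ∀ z ∈ Z, W.ρ z = 1) : FDRep ℂ (G ⧸ Z) :=
  FDRep.of ((Units.coeHom _).comp
    (QuotientGroup.lift Z W.ρ.toHomUnits fun z hz => Units.ext (hW z hz)))

noncomputable def pullbackRepDescendIso (W : FDRep ℂ G) (hW : ∀ z ∈ Z, W.ρ z = 1) :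
    pullbackRep Z (W.descend hW) ≅ W :=
  Action.mkIso (Iso.refl W.V) fun _ => rfl

end FDRep

/-- Let `G` be a finite perfect group, `p` a prime, and `Z` a central subgroup of
`p`-power order. Then precomposition with the quotient map `π : G → G ⧸ Z` induces a
bijection between the isomorphism classes of irreducible finite-dimensional complex
representations of `G ⧸ Z` of dimension prime to `p` and those of `G`: it is well defined
(preserving irreducibility and the dimension condition), injective on isomorphism
classes, and essentially surjective. -/
theorem pullback_bijection_irreducible_p_prime_reps (G : Type) [Group G] [Finite G]
    (hperf : commutator G = ⊤) (p : ℕ) (hp : p.Prime)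
    (Z : Subgroup G) [Z.Normal] (hZ : Z ≤ Subgroup.center G)
    (hcard : ∃ k : ℕ, Nat.card Z = p ^ k) :
    (∀ V : FDRep ℂ (G ⧸ Z), CategoryTheory.Simple V → ¬ p ∣ Module.finrank ℂ V →
      CategoryTheory.Simple (pullbackRep Z V) ∧ ¬ p ∣ Module.finrank ℂ (pullbackRep Z V)) ∧
    (∀ V W : FDRep ℂ (G ⧸ Z), CategoryTheory.Simple V → CategoryTheory.Simple W →
      ¬ p ∣ Module.finrank ℂ V → ¬ p ∣ Module.finrank ℂ W →
      Nonempty (pullbackRep Z V ≅ pullbackRep Z W) → Nonempty (V ≅ W)) ∧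
    (∀ W : FDRep ℂ G, CategoryTheory.Simple W → ¬ p ∣ Module.finrank ℂ W →
      ∃ V : FDRep ℂ (G ⧸ Z), CategoryTheory.Simple V ∧ ¬ p ∣ Module.finrank ℂ V ∧
        Nonempty (pullbackRep Z V ≅ W)) := by
  obtain ⟨k, hk⟩ := hcard
  have hZpow : ∀ z ∈ Z, z ^ p ^ k = 1 := fun z hz =>
    congrArg Subtype.val (hk ▸ pow_card_eq_one' : (⟨z, hz⟩ : Z) ^ p ^ k = 1)
  refine ⟨fun V hV hdim => ⟨(simple_pullbackRep_iff Z V).2 hV, hdim⟩,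
    fun V W _ _ _ _ ⟨e⟩ => ⟨pullbackRep.preimageIso Z e⟩, fun W hW hdim => ?_⟩
  have hZW : ∀ z ∈ Z, W.ρ z = 1 := fun z hz =>
    W.ρ_eq_one_of_mem_center hperf hp hdim (hZ hz) (hZpow z hz)
  let e := W.pullbackRepDescendIso hZW
  exact ⟨W.descend hZW, (simple_pullbackRep_iff Z _).1 (Simple.of_iso e), hdim, ⟨e⟩⟩
end
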